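/- arXiv:2406.10622 — 8 statements merged into one kernel-verified Lean document; each statement's English description precedes it below -/
import Mathlib

section
/- The sequence n ↦ log(n·tan(π/n)) is convex for integers n ≥ 3; that is, for all n ≥ 4, log((n-1)·tan(π/(n-1))) + log((n+1)·tan(π/(n+1))) ≥ 2·log(n·tan(π/n)). -/
open Real Set

/-- On `(0, π/2)` we have `s² ≤ tan s · sin s`. -/
lemma key_tan_sin {s : ℝ} (hs : s ∈ Set.Ioo 0 (π/2)) : s^2 ≤ Real.tan s * Real.sin s := by
  have hmono : MonotoneOn (fun x => Real.tan x * Real.sin x - x^2) (Set.Ico 0 (π/2)) := by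
    apply monotoneOn_of_hasDerivWithinAt_nonneg (convex_Ico _ _)
      (f' := fun x => (1 / Real.cos x ^ 2) * Real.sin x + Real.tan x * Real.cos x - 2*x)
    · apply ContinuousOn.sub
      · apply ContinuousOn.mul
        · apply Real.continuousOn_tan.mono
          intro x hx
          exact (Real.cos_pos_of_mem_Ioo ⟨by linarith [hx.1, Real.pi_pos], hx.2⟩).ne'
        · exact Real.continuous_sin.continuousOn
      · exact (continuous_pow 2).continuousOn
    · rw [interior_Ico]
      intro x hx
      have hc : 0 < Real.cos x := Real.cos_pos_of_mem_Ioo ⟨by linarith [hx.1, Real.pi_pos], hx.2⟩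
      have h1 : HasDerivAt (fun x => Real.tan x * Real.sin x - x^2)
          ((1 / Real.cos x ^ 2) * Real.sin x + Real.tan x * Real.cos x - 2*x) x := by
        have := ((Real.hasDerivAt_tan hc.ne').mul (Real.hasDerivAt_sin x)).sub
          (hasDerivAt_pow 2 x)
        convert this using 1
        · rfl
        · rfl
        · rfl
        push_cast
        ring
      exact h1.hasDerivWithinAt
    · rw [interior_Ico]
      intro x hx
      have hc : 0 < Real.cos x := Real.cos_pos_of_mem_Ioo ⟨by linarith [hx.1, Real.pi_pos], hx.2⟩
      have hsx : 0 ≤ Real.sin x := Real.sin_nonneg_of_nonneg_of_le_pi hx.1.le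
        (by linarith [Real.pi_pos, hx.2])
      have htan : x < Real.tan x := Real.lt_tan hx.1 hx.2
      have e1 : Real.tan x * Real.cos x = Real.sin x := Real.tan_mul_cos hc.ne'
      have e2 : Real.tan x = Real.sin x / Real.cos x := Real.tan_eq_sin_div_cos x
      have e3 : (1 / Real.cos x ^ 2) * Real.sin x + Real.sin x
          - 2 * (Real.sin x / Real.cos x) = Real.sin x * (1/Real.cos x - 1)^2 := by
        field_simp
        ring
      have e4 : 0 ≤ Real.sin x * (1/Real.cos x - 1)^2 := by positivity
      rw [e1]
      have : Real.sin x / Real.cos x > x := by rw [← e2]; exact htan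
      nlinarith [this]
  have h0 : (0:ℝ) ∈ Set.Ico (0:ℝ) (π/2) := ⟨le_refl _, by positivity⟩
  have hsm : s ∈ Set.Ico (0:ℝ) (π/2) := ⟨hs.1.le, hs.2⟩
  have := hmono h0 hsm hs.1.le
  simpa using this

/-- On `(0, π/2)` we have `s² cos s ≤ sin² s`. -/
lemma key_sq {s : ℝ} (hs : s ∈ Set.Ioo 0 (π/2)) :
    s^2 * Real.cos s ≤ Real.sin s ^ 2 := by
  have hc : 0 < Real.cos s := Real.cos_pos_of_mem_Ioo ⟨by linarith [hs.1, Real.pi_pos], hs.2⟩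
  have h := key_tan_sin hs
  have e1 : Real.tan s * Real.sin s * Real.cos s = Real.sin s ^ 2 := by
    rw [mul_comm (Real.tan s) (Real.sin s), mul_assoc, Real.tan_mul_cos hc.ne']
    ring
  calc s^2 * Real.cos s ≤ (Real.tan s * Real.sin s) * Real.cos s := by
        apply mul_le_mul_of_nonneg_right h hc.le
    _ = Real.sin s ^ 2 := e1

noncomputable def uu : ℝ → ℝ := fun t => Real.log (Real.tan t) - Real.log t

noncomputable def uu' : ℝ → ℝ := fun t => (Real.sin t * Real.cos t)⁻¹ - t⁻¹

noncomputable def uu'' : ℝ → ℝ := fun t =>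
  (t^2)⁻¹ - (Real.cos t ^ 2 - Real.sin t ^ 2) / (Real.sin t * Real.cos t)^2

lemma mem_facts {t : ℝ} (ht : t ∈ Set.Ioo 0 (π/2)) :
    0 < Real.cos t ∧ 0 < Real.sin t ∧ 0 < Real.tan t := by
  have hc : 0 < Real.cos t := Real.cos_pos_of_mem_Ioo ⟨by linarith [ht.1, Real.pi_pos], ht.2⟩
  have hs : 0 < Real.sin t := Real.sin_pos_of_pos_of_lt_pi ht.1
    (by linarith [Real.pi_pos, ht.2])
  exact ⟨hc, hs, Real.tan_pos_of_pos_of_lt_pi_div_two ht.1 ht.2⟩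

lemma hasDerivAt_uu {t : ℝ} (ht : t ∈ Set.Ioo 0 (π/2)) : HasDerivAt uu (uu' t) t := by
  obtain ⟨hc, hs, htan⟩ := mem_facts ht
  have h1 : HasDerivAt (fun t => Real.log (Real.tan t))
      ((1 / Real.cos t ^ 2) / Real.tan t) t :=
    (Real.hasDerivAt_tan hc.ne').log htan.ne'
  have h2 : HasDerivAt Real.log t⁻¹ t := Real.hasDerivAt_log ht.1.ne'
  have h3 := h1.sub h2
  convert h3 using 1
  · rfl
  · rfl
  · rfl
  unfold uu'
  rw [Real.tan_eq_sin_div_cos]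
  field_simp

lemma hasDerivAt_uu' {t : ℝ} (ht : t ∈ Set.Ioo 0 (π/2)) : HasDerivAt uu' (uu'' t) t := by
  obtain ⟨hc, hs, htan⟩ := mem_facts ht
  have hne : Real.sin t * Real.cos t ≠ 0 := (mul_pos hs hc).ne'
  have h1 : HasDerivAt (fun t => Real.sin t * Real.cos t)
      (Real.cos t * Real.cos t + Real.sin t * (-Real.sin t)) t :=
    (Real.hasDerivAt_sin t).mul (Real.hasDerivAt_cos t)
  have h2 := h1.inv hne
  have h3 : HasDerivAt (fun t : ℝ => t⁻¹) (-(t^2)⁻¹) t := hasDerivAt_inv ht.1.ne'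
  have h4 := h2.sub h3
  convert h4 using 1
  · rfl
  · rfl
  · rfl
  unfold uu''
  field_simp
  ring

lemma uu''_nonneg {t : ℝ} (ht : t ∈ Set.Ioo 0 (π/2)) : 0 ≤ uu'' t := by
  obtain ⟨hc, hs, htan⟩ := mem_facts ht
  unfold uu''
  rw [sub_nonneg, div_le_iff₀ (pow_pos (mul_pos hs hc) 2)]
  rcases le_or_gt (Real.cos t ^ 2 - Real.sin t ^ 2) 0 with h | h
  · have : (0:ℝ) < (t^2)⁻¹ := inv_pos.2 (pow_pos ht.1 2)
    nlinarith [sq_nonneg (Real.sin t * Real.cos t)]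
  · -- cos 2t > 0, so 2t < π/2
    have hcos2 : 0 < Real.cos (2*t) := by rw [Real.cos_two_mul']; exact h
    have h2t : 2*t < π/2 := by
      by_contra hcon
      push_neg at hcon
      have : Real.cos (2*t) ≤ 0 := Real.cos_nonpos_of_pi_div_two_le_of_le hcon
        (by linarith [ht.2, Real.pi_pos])
      linarith
    have hmem : 2*t ∈ Set.Ioo 0 (π/2) := ⟨by linarith [ht.1], h2t⟩
    have := key_sq hmem
    rw [Real.cos_two_mul', Real.sin_two_mul] at this
    have e : (2 * Real.sin t * Real.cos t)^2 = 4 * (Real.sin t * Real.cos t)^2 := by ring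
    have ht2 : (0:ℝ) < t^2 := pow_pos ht.1 2
    rw [e] at this
    have h5 : (2*t)^2 * (Real.cos t ^2 - Real.sin t ^2)
        = 4 * (t^2 * (Real.cos t ^2 - Real.sin t ^2)) := by ring
    have h6 : t^2 * (Real.cos t ^2 - Real.sin t ^2) ≤ (Real.sin t * Real.cos t)^2 := by
      nlinarith
    calc Real.cos t ^ 2 - Real.sin t ^ 2
        = (t^2 * (Real.cos t ^2 - Real.sin t ^2)) * (t^2)⁻¹ := by
          field_simp
          exact (div_self ht.1.ne').symm
      _ ≤ (Real.sin t * Real.cos t)^2 * (t^2)⁻¹ := by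
          apply mul_le_mul_of_nonneg_right h6 (by positivity)
      _ = (t^2)⁻¹ * (Real.sin t * Real.cos t)^2 := by ring

lemma uu_continuousOn : ContinuousOn uu (Set.Ioo 0 (π/2)) := fun t ht =>
  ((hasDerivAt_uu ht).continuousAt).continuousWithinAt

lemma uu_convex : ConvexOn ℝ (Set.Ioo 0 (π/2)) uu := by
  apply convexOn_of_hasDerivWithinAt2_nonneg (convex_Ioo _ _) uu_continuousOn
    (f' := uu') (f'' := uu'')
  · rw [interior_Ioo]
    exact fun t ht => (hasDerivAt_uu ht).hasDerivWithinAt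
  · rw [interior_Ioo]
    exact fun t ht => (hasDerivAt_uu' ht).hasDerivWithinAt
  · rw [interior_Ioo]
    exact fun t ht => uu''_nonneg ht

lemma uu_mono : MonotoneOn uu (Set.Ioo 0 (π/2)) := by
  apply monotoneOn_of_hasDerivWithinAt_nonneg (convex_Ioo _ _) uu_continuousOn (f' := uu')
  · rw [interior_Ioo]
    exact fun t ht => (hasDerivAt_uu ht).hasDerivWithinAt
  · rw [interior_Ioo]
    intro t ht
    obtain ⟨hc, hs, htan⟩ := mem_facts ht
    unfold uu'
    rw [sub_nonneg]
    apply inv_anti₀ (by positivity)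
    calc Real.sin t * Real.cos t ≤ Real.sin t * 1 := by
          apply mul_le_mul_of_nonneg_left (Real.cos_le_one t) hs.le
      _ = Real.sin t := mul_one _
      _ ≤ t := Real.sin_le ht.1.le

theorem stmt_1 (n : ℕ) (hn : 4 ≤ n) :
    Real.log (((n : ℝ) - 1) * Real.tan (Real.pi / ((n : ℝ) - 1)))
        + Real.log (((n : ℝ) + 1) * Real.tan (Real.pi / ((n : ℝ) + 1)))
      ≥ 2 * Real.log ((n : ℝ) * Real.tan (Real.pi / (n : ℝ))) := by
  have hN : (4:ℝ) ≤ (n:ℝ) := by exact_mod_cast hn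
  set N : ℝ := (n:ℝ) with hNdef
  have hπ : 0 < π := Real.pi_pos
  have hN1 : (0:ℝ) < N - 1 := by linarith
  have hN2 : (0:ℝ) < N + 1 := by linarith
  have hN0 : (0:ℝ) < N := by linarith
  set t1 : ℝ := π / (N - 1) with ht1def
  set t0 : ℝ := π / N with ht0def
  set t2 : ℝ := π / (N + 1) with ht2def
  have ht1 : t1 ∈ Set.Ioo 0 (π/2) := by
    constructor
    · exact div_pos hπ hN1
    · apply div_lt_div_of_pos_left hπ (by norm_num) (by linarith)
  have ht0 : t0 ∈ Set.Ioo 0 (π/2) := by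
    constructor
    · exact div_pos hπ hN0
    · apply div_lt_div_of_pos_left hπ (by norm_num) (by linarith)
  have ht2 : t2 ∈ Set.Ioo 0 (π/2) := by
    constructor
    · exact div_pos hπ hN2
    · apply div_lt_div_of_pos_left hπ (by norm_num) (by linarith)
  -- midpoint
  have hconv := uu_convex
  have happ := hconv.2 ht2 ht1 (by norm_num : (0:ℝ) ≤ 1/2) (by norm_num : (0:ℝ) ≤ 1/2)
    (by norm_num)
  simp only [smul_eq_mul] at happ
  set m : ℝ := (1/2) * t2 + (1/2) * t1 with hmdef
  have hmmem : m ∈ Set.Ioo 0 (π/2) := by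
    constructor
    · have := ht1.1; have := ht2.1; rw [hmdef]; linarith
    · have := ht1.2; have := ht2.2; rw [hmdef]; linarith
  have ht0m : t0 ≤ m := by
    have e : (1/2)*(π/(N+1)) + (1/2)*(π/(N-1)) - π/N = π/((N+1)*(N-1)*N) := by
      field_simp
      ring
    have hpos : (0:ℝ) < π/((N+1)*(N-1)*N) := by positivity
    rw [hmdef, ht0def, ht1def, ht2def]
    linarith
  have hmono := uu_mono ht0 hmmem ht0m
  have hchain : 2 * uu t0 ≤ uu t1 + uu t2 := by linarith
  -- unfold and convert
  obtain ⟨_, _, htan1⟩ := mem_facts ht1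
  obtain ⟨_, _, htan0⟩ := mem_facts ht0
  obtain ⟨_, _, htan2⟩ := mem_facts ht2
  have l1 : Real.log ((N - 1) * Real.tan t1) = Real.log (N-1) + Real.log (Real.tan t1) :=
    Real.log_mul hN1.ne' htan1.ne'
  have l2 : Real.log ((N + 1) * Real.tan t2) = Real.log (N+1) + Real.log (Real.tan t2) :=
    Real.log_mul hN2.ne' htan2.ne'
  have l0 : Real.log (N * Real.tan t0) = Real.log N + Real.log (Real.tan t0) :=
    Real.log_mul hN0.ne' htan0.ne'
  have d1 : Real.log t1 = Real.log π - Real.log (N-1) := by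
    rw [ht1def, Real.log_div hπ.ne' hN1.ne']
  have d2 : Real.log t2 = Real.log π - Real.log (N+1) := by
    rw [ht2def, Real.log_div hπ.ne' hN2.ne']
  have d0 : Real.log t0 = Real.log π - Real.log N := by
    rw [ht0def, Real.log_div hπ.ne' hN0.ne']
  have eu1 : uu t1 = Real.log (Real.tan t1) - Real.log t1 := rfl
  have eu2 : uu t2 = Real.log (Real.tan t2) - Real.log t2 := rfl
  have eu0 : uu t0 = Real.log (Real.tan t0) - Real.log t0 := rfl
  rw [ge_iff_le]
  rw [eu1, eu2, eu0, d1, d2, d0] at hchain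
  rw [l1, l2, l0]
  linarith
end

section
/- The sequence n ↦ n·tan(π/n) is strictly decreasing for integers n ≥ 3, and n·tan(π/n) > π for all n ≥ 3. -/
open Real Set

lemma tan_div_strictMono : StrictMonoOn (fun x : ℝ => Real.tan x / x) (Ioo 0 (π/2)) := by
  have hid : interior (Ioo (0:ℝ) (π/2)) = Ioo 0 (π/2) := interior_Ioo
  apply strictMonoOn_of_deriv_pos (convex_Ioo 0 (π/2))
  · apply ContinuousOn.div
    · exact Real.continuousOn_tan.mono (fun x hx => by
        have := Real.cos_pos_of_mem_Ioo (Ioo_subset_Ioo (by linarith [pi_pos]) le_rfl hx)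
        exact this.ne')
    · exact continuousOn_id
    · intro x hx; exact hx.1.ne'
  · intro x hx
    rw [hid] at hx
    obtain ⟨hx0, hx2⟩ := hx
    have hcos : 0 < Real.cos x := Real.cos_pos_of_mem_Ioo ⟨by linarith [pi_pos], hx2⟩
    have hd : HasDerivAt (fun y : ℝ => Real.tan y / y)
        ((1 / Real.cos x ^ 2 * x - Real.tan x * 1) / x ^ 2) x :=
      (Real.hasDerivAt_tan hcos.ne').div (hasDerivAt_id x) hx0.ne'
    rw [hd.deriv]
    apply div_pos _ (by positivity)
    have hsin : Real.sin x < x := Real.sin_lt hx0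
    have hsinpos : 0 < Real.sin x := Real.sin_pos_of_pos_of_lt_pi hx0 (by linarith [pi_pos])
    have h1 : Real.sin x * Real.cos x < x := by
      calc Real.sin x * Real.cos x ≤ Real.sin x * 1 := by
            exact mul_le_mul_of_nonneg_left (Real.cos_le_one x) hsinpos.le
        _ = Real.sin x := mul_one _
        _ < x := hsin
    rw [Real.tan_eq_sin_div_cos]
    rw [sub_pos, mul_one]
    have he : 1 / Real.cos x ^ 2 * x = x / Real.cos x ^ 2 := by ring
    rw [he, div_lt_div_iff₀ hcos (by positivity)]
    nlinarith [mul_lt_mul_of_pos_right h1 hcos]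

theorem stmt_2 :
    (∀ m n : ℕ, 3 ≤ m → m < n →
      (n : ℝ) * Real.tan (Real.pi / n) < (m : ℝ) * Real.tan (Real.pi / m)) ∧
    (∀ n : ℕ, 3 ≤ n → (n : ℝ) * Real.tan (Real.pi / n) > Real.pi) := by
  have hpi := Real.pi_pos
  have key : ∀ n : ℕ, 3 ≤ n → π / n ∈ Ioo 0 (π/2) := by
    intro n hn
    have hn3 : (3:ℝ) ≤ n := by exact_mod_cast hn
    constructor
    · positivity
    · rw [div_lt_div_iff₀ (by linarith) (by norm_num)]
      nlinarith
  constructor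
  · intro m n hm hmn
    have hm3 : (3:ℝ) ≤ m := by exact_mod_cast hm
    have hmn' : (m:ℝ) < n := by exact_mod_cast hmn
    have h1 := key m hm
    have h2 := key n (by omega)
    have hlt : π / n < π / m := by
      apply div_lt_div_of_pos_left hpi (by linarith) hmn'
    have := tan_div_strictMono h2 h1 hlt
    simp only at this
    have en : Real.tan (π/n) / (π/n) = (n:ℝ) * Real.tan (π/n) / π := by
      field_simp
    have em : Real.tan (π/m) / (π/m) = (m:ℝ) * Real.tan (π/m) / π := by
      field_simp
    rw [en, em, div_lt_div_iff₀ hpi hpi] at this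
    nlinarith
  · intro n hn
    have h := key n hn
    have := Real.lt_tan h.1 h.2
    have hn0 : (0:ℝ) < n := by positivity
    calc π = (n:ℝ) * (π / n) := by field_simp
      _ < (n:ℝ) * Real.tan (π / n) := by
          exact mul_lt_mul_of_pos_left this hn0
end

section
/- The function f(n) = √(n·tan(π/n)) satisfies the weak Dowker inequality at 6 for exponent 1/2: for all integers m, n with 3 ≤ m < 6 < n, ((n-6)/(n-m))·√(m·tan(π/m)) + ((6-m)/(n-m))·√(n·tan(π/n)) ≥ √(6·tan(π/6)), with the minimum of the left-hand side over such (m,n) attained at m = 5, n = 7. -/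
set_option maxHeartbeats 1000000

open Real

private lemma sqrtLB {a : ℝ} {c : ℝ} (hc : 0 ≤ c) (h : c^2 ≤ a) : c ≤ Real.sqrt a :=
  (Real.le_sqrt hc (le_trans (sq_nonneg c) h)).mpr h

private lemma sqrtUB {a : ℝ} {c : ℝ} (hc : 0 ≤ c) (h : a ≤ c^2) : Real.sqrt a ≤ c :=
  (Real.sqrt_le_left hc).mpr h

private lemma sqrt_pi_lb : (1.7724:ℝ) ≤ Real.sqrt π := by
  apply sqrtLB (by norm_num)
  nlinarith [Real.pi_gt_d6]

private lemma g_ge_sqrt_pi (n : ℕ) (hn : 3 ≤ n) :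
    Real.sqrt π ≤ Real.sqrt ((n:ℝ) * Real.tan (π / n)) := by
  apply Real.sqrt_le_sqrt
  have hn3 : (3:ℝ) ≤ (n:ℝ) := by exact_mod_cast hn
  have hnpos : (0:ℝ) < (n:ℝ) := by linarith
  have h1 : 0 < π / n := by positivity
  have h2 : π / n < π / 2 := by
    rw [div_lt_div_iff₀ hnpos (by norm_num)]
    nlinarith [Real.pi_pos]
  have := Real.lt_tan h1 h2
  have : π / n ≤ Real.tan (π / n) := this.le
  calc π = (n:ℝ) * (π / n) := by field_simp
    _ ≤ (n:ℝ) * Real.tan (π / n) := by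
        exact mul_le_mul_of_nonneg_left this hnpos.le

private lemma g7_bounds :
    (1.8307:ℝ) ≤ Real.sqrt (7 * Real.tan (π / 7)) ∧
    Real.sqrt (7 * Real.tan (π / 7)) ≤ 1.8442 := by
  have ha : (0.4487988:ℝ) ≤ π/7 := by linarith [Real.pi_gt_d6]
  have hb : π/7 ≤ (0.4487990:ℝ) := by linarith [Real.pi_lt_d6]
  set x := π/7 with hxdef
  have hx0 : 0 < x := by linarith
  have habs : |x| ≤ 1 := by rw [abs_of_pos hx0]; linarith
  have hs := Real.sin_bound habs
  have hc := Real.cos_bound habs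
  rw [abs_of_pos hx0, abs_le] at hs hc
  have h2 : x^2 ≤ 0.2014206 := by nlinarith [pow_le_pow_left₀ hx0.le hb 2]
  have h2' : (0.2014203:ℝ) ≤ x^2 := by nlinarith [pow_le_pow_left₀ (by norm_num : (0:ℝ) ≤ 0.4487988) ha 2]
  have h3 : x^3 ≤ 0.0903974 := by nlinarith [pow_le_pow_left₀ hx0.le hb 3]
  have h3' : (0.0903972:ℝ) ≤ x^3 := by nlinarith [pow_le_pow_left₀ (by norm_num : (0:ℝ) ≤ 0.4487988) ha 3]
  have h4 : x^4 ≤ 0.0405703 := by nlinarith [pow_le_pow_left₀ hx0.le hb 4]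
  have h4' : (0:ℝ) ≤ x^4 := by positivity
  have hslo : (0.4316190:ℝ) ≤ Real.sin x := by linarith [hs.1, pow_le_pow_left₀ hx0.le hb 5]
  have hshi : Real.sin x ≤ 0.4358460 := by linarith [hs.2, pow_le_pow_left₀ hx0.le hb 5]
  have hclo : (0.8971766:ℝ) ≤ Real.cos x := by linarith [hc.1]
  have hchi : Real.cos x ≤ 0.9014030 := by linarith [hc.2]
  have hcpos : 0 < Real.cos x := by linarith
  have htan : Real.tan x = Real.sin x / Real.cos x := Real.tan_eq_sin_div_cos x
  have htlo : (0.4788290:ℝ) ≤ Real.tan x := by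
    rw [htan, le_div_iff₀ hcpos]; nlinarith [hchi, hslo]
  have hthi : Real.tan x ≤ 0.4858600 := by
    rw [htan, div_le_iff₀ hcpos]; nlinarith [hclo, hshi]
  constructor
  · apply sqrtLB (by norm_num); linarith
  · apply sqrtUB (by norm_num); linarith

private lemma g9_lb : (1.807:ℝ) ≤ Real.sqrt (9 * Real.tan (π / 9)) := by
  have ha : (0.3490657:ℝ) ≤ π/9 := by linarith [Real.pi_gt_d6]
  have hb : π/9 ≤ (0.3490659:ℝ) := by linarith [Real.pi_lt_d6]
  set x := π/9 with hxdef
  have hx0 : 0 < x := by linarith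
  have habs : |x| ≤ 1 := by rw [abs_of_pos hx0]; linarith
  have hs := Real.sin_bound habs
  have hc := Real.cos_bound habs
  rw [abs_of_pos hx0, abs_le] at hs hc
  have h2' : (0.1218468:ℝ) ≤ x^2 := by nlinarith [pow_le_pow_left₀ (by norm_num : (0:ℝ) ≤ 0.3490657) ha 2]
  have h3 : x^3 ≤ 0.0425327 := by nlinarith [pow_le_pow_left₀ hx0.le hb 3]
  have h4 : x^4 ≤ 0.0148471 := by nlinarith [pow_le_pow_left₀ hx0.le hb 4]
  have h4' : (0:ℝ) ≤ x^4 := by positivity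
  have hslo : (0.3412036:ℝ) ≤ Real.sin x := by linarith [hs.1, pow_le_pow_left₀ hx0.le hb 5]
  have hchi : Real.cos x ≤ 0.9398499 := by linarith [hc.2]
  have hcpos : 0 < Real.cos x := by nlinarith [hc.1]
  have htan : Real.tan x = Real.sin x / Real.cos x := Real.tan_eq_sin_div_cos x
  have htlo : (0.3630:ℝ) ≤ Real.tan x := by
    rw [htan, le_div_iff₀ hcpos]; nlinarith
  apply sqrtLB (by norm_num); nlinarith

private lemma g5_bounds :
    (1.9059:ℝ) ≤ Real.sqrt (5 * Real.tan (π / 5)) ∧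
    Real.sqrt (5 * Real.tan (π / 5)) ≤ 1.9060 := by
  have hcos := Real.cos_pi_div_five
  have hs5 : Real.sqrt 5 ^ 2 = 5 := Real.sq_sqrt (by norm_num)
  have hs5lo : (2.2360679:ℝ) ≤ Real.sqrt 5 := sqrtLB (by norm_num) (by norm_num)
  have hs5hi : Real.sqrt 5 ≤ (2.2360680:ℝ) := sqrtUB (by norm_num) (by norm_num)
  have hcpos : 0 < Real.cos (π/5) := by rw [hcos]; positivity
  have hsc := Real.sin_sq_add_cos_sq (π/5)
  have htan : Real.tan (π/5) = Real.sin (π/5) / Real.cos (π/5) := Real.tan_eq_sin_div_cos _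
  have hkey : Real.tan (π/5)^2 * Real.cos (π/5)^2 = Real.sin (π/5)^2 := by
    rw [htan]; field_simp
  have hsin2 : Real.sin (π/5)^2 = 1 - Real.cos (π/5)^2 := by linarith [hsc]
  rw [hsin2, hcos] at hkey
  have htpos : 0 < Real.tan (π/5) := by
    apply Real.tan_pos_of_pos_of_lt_pi_div_two
    · positivity
    · rw [div_lt_div_iff₀ (by norm_num) (by norm_num)]; nlinarith [Real.pi_pos]
  have ht2lo : (0.527864:ℝ) ≤ Real.tan (π/5)^2 := by nlinarith [sq_nonneg (Real.tan (π/5))]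
  have ht2hi : Real.tan (π/5)^2 ≤ (0.5278642:ℝ) := by nlinarith [sq_nonneg (Real.tan (π/5))]
  have htlo : (0.7265:ℝ) ≤ Real.tan (π/5) := by nlinarith
  have hthi : Real.tan (π/5) ≤ (0.72656:ℝ) := by nlinarith
  constructor
  · apply sqrtLB (by norm_num); nlinarith
  · apply sqrtUB (by norm_num); nlinarith

private lemma g8_lb : (1.8203:ℝ) ≤ Real.sqrt (8 * Real.tan (π / 8)) := by
  have hcos := Real.cos_pi_div_eight
  have hsin := Real.sin_pi_div_eight
  have hs2 : Real.sqrt 2 ^ 2 = 2 := Real.sq_sqrt (by norm_num)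
  have hs2lo : (1.4142135:ℝ) ≤ Real.sqrt 2 := sqrtLB (by norm_num) (by norm_num)
  have hs2hi : Real.sqrt 2 ≤ (1.4142136:ℝ) := sqrtUB (by norm_num) (by norm_num)
  have h2p : Real.sqrt (2 + Real.sqrt 2) ^ 2 = 2 + Real.sqrt 2 := Real.sq_sqrt (by linarith)
  have h2m : Real.sqrt (2 - Real.sqrt 2) ^ 2 = 2 - Real.sqrt 2 := Real.sq_sqrt (by linarith)
  have hcpos : 0 < Real.cos (π/8) := by
    rw [hcos]
    have : 0 < Real.sqrt (2 + Real.sqrt 2) := Real.sqrt_pos.mpr (by linarith)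
    linarith
  have htan : Real.tan (π/8) = Real.sin (π/8) / Real.cos (π/8) := Real.tan_eq_sin_div_cos _
  have hkey : Real.tan (π/8)^2 * Real.cos (π/8)^2 = Real.sin (π/8)^2 := by
    rw [htan]; field_simp
  rw [hcos, hsin] at hkey
  have htpos : 0 < Real.tan (π/8) := by
    apply Real.tan_pos_of_pos_of_lt_pi_div_two
    · positivity
    · rw [div_lt_div_iff₀ (by norm_num) (by norm_num)]; nlinarith [Real.pi_pos]
  -- tan^2 * (2+√2) = 2-√2, so tan^2 = 3-2√2
  have hkey2 : Real.tan (π/8)^2 * (2 + Real.sqrt 2) = 2 - Real.sqrt 2 := by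
    have : Real.tan (π/8)^2 * ((2 + Real.sqrt 2)/4) = (2 - Real.sqrt 2)/4 := by
      calc Real.tan (π/8)^2 * ((2 + Real.sqrt 2)/4)
          = Real.tan (π/8)^2 * (Real.sqrt (2 + Real.sqrt 2)/2)^2 := by rw [div_pow, h2p]; ring
        _ = (Real.sqrt (2 - Real.sqrt 2)/2)^2 := hkey
        _ = (2 - Real.sqrt 2)/4 := by rw [div_pow, h2m]; norm_num
    linarith
  have ht2lo : (0.1715728:ℝ) ≤ Real.tan (π/8)^2 := by nlinarith
  have htlo : (0.414212:ℝ) ≤ Real.tan (π/8) := by nlinarith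
  apply sqrtLB (by norm_num); nlinarith

private lemma g3_lb : (2.2795:ℝ) ≤ Real.sqrt (3 * Real.tan (π / 3)) := by
  have h := Real.tan_pi_div_three
  have hs3 : Real.sqrt 3 ^ 2 = 3 := Real.sq_sqrt (by norm_num)
  have hs3lo : (1.7320508:ℝ) ≤ Real.sqrt 3 := sqrtLB (by norm_num) (by norm_num)
  rw [h]
  apply sqrtLB (by norm_num); nlinarith

private lemma g6_ub : Real.sqrt (6 * Real.tan (π / 6)) ≤ 1.8613 := by
  have h := Real.tan_pi_div_six
  have hs3 : Real.sqrt 3 ^ 2 = 3 := Real.sq_sqrt (by norm_num)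
  have hs3hi : Real.sqrt 3 ≤ (1.7320509:ℝ) := sqrtUB (by norm_num) (by norm_num)
  have hs3pos : 0 < Real.sqrt 3 := Real.sqrt_pos.mpr (by norm_num)
  have h6 : (6:ℝ) * Real.tan (π/6) = 2 * Real.sqrt 3 := by
    rw [h]; field_simp; nlinarith
  rw [h6]
  apply sqrtUB (by norm_num); nlinarith

private lemma g4_eq : Real.sqrt (4 * Real.tan (π / 4)) = 2 := by
  rw [Real.tan_pi_div_four]
  have : (4:ℝ) * 1 = 2^2 := by norm_num
  rw [this, Real.sqrt_sq (by norm_num)]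

private lemma tail_bound (m n : ℕ) (l0 gm : ℝ) (hm6 : (m:ℝ) < 6) (hn6 : (6:ℝ) < (n:ℝ))
    (hgm : gm ≤ Real.sqrt ((m:ℝ) * Real.tan (π / m)))
    (hgn : (1.7724:ℝ) ≤ Real.sqrt ((n:ℝ) * Real.tan (π / n)))
    (hl0 : 0 ≤ l0) (hl : l0 ≤ ((n:ℝ) - 6) / ((n:ℝ) - m))
    (hgm0 : (1.7724:ℝ) ≤ gm)
    (ht : (1.8751:ℝ) ≤ 1.7724 + l0 * (gm - 1.7724)) :
    (1.8751:ℝ) ≤ ((n:ℝ) - 6) / ((n:ℝ) - m) * Real.sqrt ((m:ℝ) * Real.tan (π / m))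
      + ((6:ℝ) - m) / ((n:ℝ) - m) * Real.sqrt ((n:ℝ) * Real.tan (π / n)) := by
  set A := Real.sqrt ((m:ℝ) * Real.tan (π / m))
  set B := Real.sqrt ((n:ℝ) * Real.tan (π / n))
  set lam := ((n:ℝ) - 6) / ((n:ℝ) - m) with hlam
  have hd : (0:ℝ) < (n:ℝ) - (m:ℝ) := by linarith
  have hco : ((6:ℝ) - m) / ((n:ℝ) - m) = 1 - lam := by
    rw [hlam]; field_simp; ring
  have hl1 : lam ≤ 1 := by
    rw [hlam, div_le_one hd]; linarith
  rw [hco]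
  have e1 : 0 ≤ lam * (A - gm) := mul_nonneg (hl0.trans hl) (by linarith)
  have e2 : 0 ≤ (1 - lam) * (B - 1.7724) := mul_nonneg (by linarith) (by linarith)
  have e3 : 0 ≤ (lam - l0) * (gm - 1.7724) := mul_nonneg (by linarith) (by linarith)
  nlinarith [e1, e2, e3, ht]

theorem stmt_3 (m n : ℕ) (hm : 3 ≤ m) (hm6 : m < 6) (hn : 6 < n) :
    (((n : ℝ) - 6) / ((n : ℝ) - m)) * Real.sqrt (m * Real.tan (Real.pi / m))
        + (((6 : ℝ) - m) / ((n : ℝ) - m)) * Real.sqrt (n * Real.tan (Real.pi / n))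
      ≥ Real.sqrt (6 * Real.tan (Real.pi / 6)) ∧
    (((n : ℝ) - 6) / ((n : ℝ) - m)) * Real.sqrt (m * Real.tan (Real.pi / m))
        + (((6 : ℝ) - m) / ((n : ℝ) - m)) * Real.sqrt (n * Real.tan (Real.pi / n))
      ≥ (1 / 2) * Real.sqrt (5 * Real.tan (Real.pi / 5))
        + (1 / 2) * Real.sqrt (7 * Real.tan (Real.pi / 7)) := by
  obtain ⟨hg5lo, hg5hi⟩ := g5_bounds
  obtain ⟨hg7lo, hg7hi⟩ := g7_bounds
  have hT : (1/2) * Real.sqrt (5 * Real.tan (π / 5)) + (1/2) * Real.sqrt (7 * Real.tan (π / 7))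
      ≤ 1.8751 := by linarith
  have hmn6 : (m:ℝ) < 6 := by exact_mod_cast hm6
  have hn6 : (6:ℝ) < (n:ℝ) := by exact_mod_cast hn
  have hn7 : (7:ℝ) ≤ (n:ℝ) := by exact_mod_cast hn
  have hgn : (1.7724:ℝ) ≤ Real.sqrt ((n:ℝ) * Real.tan (π / n)) :=
    le_trans sqrt_pi_lb (g_ge_sqrt_pi n (by omega))
  have key : (((n : ℝ) - 6) / ((n : ℝ) - m)) * Real.sqrt (m * Real.tan (π / m))
        + (((6 : ℝ) - m) / ((n : ℝ) - m)) * Real.sqrt (n * Real.tan (π / n))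
      ≥ (1 / 2) * Real.sqrt (5 * Real.tan (π / 5))
        + (1 / 2) * Real.sqrt (7 * Real.tan (π / 7)) := by
    interval_cases m
    · -- m = 3
      have := tail_bound 3 n (1/4) 2.2795 (by norm_num) hn6
        (by push_cast; exact g3_lb) hgn (by norm_num)
        (by rw [le_div_iff₀ (by linarith : (0:ℝ) < (n:ℝ) - (3:ℕ))]; push_cast; linarith)
        (by norm_num) (by norm_num)
      push_cast at this ⊢
      linarith
    · -- m = 4
      rcases eq_or_lt_of_le (by omega : 7 ≤ n) with h7 | h8
      · subst h7
        push_cast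
        rw [g4_eq]
        linarith
      · have := tail_bound 4 n (1/2) 2 (by norm_num) hn6
          (by push_cast; rw [g4_eq]) hgn (by norm_num)
          (by rw [le_div_iff₀ (by push_cast; linarith : (0:ℝ) < (n:ℝ) - (4:ℕ))]; push_cast
              have : (8:ℝ) ≤ (n:ℝ) := by exact_mod_cast h8
              linarith)
          (by norm_num) (by norm_num)
        push_cast at this ⊢
        linarith
    · -- m = 5
      rcases lt_or_ge n 10 with h10 | h10
      · interval_cases n
        · -- n = 7
          push_cast
          linarith
        · -- n = 8
          push_cast
          linarith [g8_lb]
        · -- n = 9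
          push_cast
          linarith [g9_lb]
      · have h10r : (10:ℝ) ≤ (n:ℝ) := by exact_mod_cast h10
        have := tail_bound 5 n (4/5) 1.9059 (by norm_num) hn6
          (by push_cast; exact hg5lo) hgn (by norm_num)
          (by rw [le_div_iff₀ (by push_cast; linarith : (0:ℝ) < (n:ℝ) - (5:ℕ))]; push_cast; linarith)
          (by norm_num) (by norm_num)
        push_cast at this ⊢
        linarith
  constructor
  · have hfirst : Real.sqrt (6 * Real.tan (π / 6))
        ≤ (1/2) * Real.sqrt (5 * Real.tan (π / 5)) + (1/2) * Real.sqrt (7 * Real.tan (π / 7)) := by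
      linarith [g6_ub]
    exact le_trans hfirst key
  · exact key
end

section
/- Let 0 < r̂ < R̂ and let 𝒯 be a tiling of ℝ² by compact convex sets, each containing a disk of radius r̂ and contained in a disk of radius R̂. For R > 2R̂, let 𝒯_bd(R) be the set of cells intersecting the circle of radius R centered at the origin. Then card(𝒯_bd(R)) ≤ 8R̂·R/r̂² and card(𝒯_bd(R)) ≥ π / arcsin(R̂/R); in particular card(𝒯_bd(R)) = Θ(R) as R → ∞. -/
open Real MeasureTheory Metric Set

noncomputable def ph (R t : ℝ) : EuclideanSpace ℝ (Fin 2) := WithLp.toLp 2 ![R * Real.cos t, R * Real.sin t]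

lemma ph_dist (R s t : ℝ) (hR : 0 ≤ R) :
    dist (ph R s) (ph R t) = 2 * R * |Real.sin ((s - t) / 2)| := by
  rw [EuclideanSpace.dist_eq]
  have h1 : Real.sin ((s - t) / 2) ^ 2 = 1 / 2 - Real.cos (s - t) / 2 := by
    have := Real.sin_sq_eq_half_sub ((s - t) / 2)
    rw [show 2 * ((s - t) / 2) = s - t by ring] at this
    exact this
  have hcos : Real.cos (s - t) = Real.cos s * Real.cos t + Real.sin s * Real.sin t :=
    Real.cos_sub s t
  have hsum : ∑ i, dist (ph R s i) (ph R t i) ^ 2 = (2 * R * |Real.sin ((s - t) / 2)|) ^ 2 := by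
    simp only [ph, PiLp.toLp_apply, Fin.sum_univ_two, Real.dist_eq, sq_abs, Matrix.cons_val_zero,
      Matrix.cons_val_one, Matrix.head_cons, mul_pow]
    nlinarith [Real.sin_sq_add_cos_sq s, Real.sin_sq_add_cos_sq t]
  rw [hsum, Real.sqrt_sq (by positivity)]

lemma ph_norm (R t : ℝ) (hR : 0 ≤ R) : ‖ph R t‖ = R := by
  rw [EuclideanSpace.norm_eq]
  simp only [ph, PiLp.toLp_apply, Fin.sum_univ_two, Matrix.cons_val_zero, Matrix.cons_val_one, Matrix.head_cons]
  rw [show ‖R * Real.cos t‖ ^ 2 + ‖R * Real.sin t‖ ^ 2 = R ^ 2 by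
    simp only [Real.norm_eq_abs, sq_abs]; nlinarith [Real.sin_sq_add_cos_sq t]]
  exact Real.sqrt_sq hR

lemma ph_periodic (R t : ℝ) : ph R (t - 2 * Real.pi) = ph R t := by
  simp [ph, Real.cos_sub_two_pi, Real.sin_sub_two_pi]

lemma ph_cont (R : ℝ) : Continuous (ph R) := by
  have h : Continuous fun t => (![R * Real.cos t, R * Real.sin t] : Fin 2 → ℝ) := by
    apply continuous_pi
    intro i
    fin_cases i <;> simp <;> fun_prop
  exact (PiLp.continuous_toLp 2 fun _ : Fin 2 => ℝ).comp h

lemma abs_sin_half {x : ℝ} (hx : |x| ≤ Real.pi) : |Real.sin (x / 2)| = Real.sin (|x| / 2) := by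
  rcases abs_cases x with ⟨h1, h2⟩ | ⟨h1, h2⟩
  · rw [h1]
    exact abs_of_nonneg (Real.sin_nonneg_of_nonneg_of_le_pi (by linarith)
      (by rw [h1] at hx; linarith))
  · rw [h1, show -x / 2 = -(x / 2) by ring, Real.sin_neg]
    have hs : Real.sin (x / 2) ≤ 0 := by
      have : -Real.pi ≤ x := by rw [h1] at hx; linarith
      exact Real.sin_nonpos_of_nonpos_of_neg_pi_le (by linarith) (by linarith)
    rw [abs_of_nonpos hs]

open scoped ENNReal

theorem stmt_7 (r R' : ℝ) (hr : 0 < r) (hrR : r < R')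
    (𝒯 : Set (Set (EuclideanSpace ℝ (Fin 2))))
    (hcount : 𝒯.Countable)
    (hunion : ⋃₀ 𝒯 = Set.univ)
    (hcv : ∀ C ∈ 𝒯, Convex ℝ C) (hcp : ∀ C ∈ 𝒯, IsCompact C)
    (hin : ∀ C ∈ 𝒯, ∃ c, Metric.closedBall c r ⊆ C)
    (hout : ∀ C ∈ 𝒯, ∃ c, C ⊆ Metric.closedBall c R')
    (hdisj : 𝒯.Pairwise fun A B => Disjoint (interior A) (interior B))
    (R : ℝ) (hR : 2 * R' < R) :
    { C ∈ 𝒯 | (C ∩ Metric.sphere (0 : EuclideanSpace ℝ (Fin 2)) R).Nonempty }.Finite ∧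
    ({ C ∈ 𝒯 | (C ∩ Metric.sphere (0 : EuclideanSpace ℝ (Fin 2)) R).Nonempty }.ncard : ℝ)
        ≤ 8 * R' * R / r ^ 2 ∧
    Real.pi / Real.arcsin (R' / R)
        ≤ ({ C ∈ 𝒯 | (C ∩ Metric.sphere (0 : EuclideanSpace ℝ (Fin 2)) R).Nonempty }.ncard : ℝ) := by
  classical
  set B := { C ∈ 𝒯 | (C ∩ Metric.sphere (0 : EuclideanSpace ℝ (Fin 2)) R).Nonempty } with hBdef
  have hr' : 0 < R' := hr.trans hrR
  have hR0 : 0 < R := by linarith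
  have hdiam : ∀ C ∈ 𝒯, ∀ x ∈ C, ∀ y ∈ C, dist x y ≤ 2 * R' := by
    intro C hC x hx y hy
    obtain ⟨d, hd⟩ := hout C hC
    have h1 : dist x d ≤ R' := mem_closedBall.mp (hd hx)
    have h2 : dist y d ≤ R' := mem_closedBall.mp (hd hy)
    calc dist x y ≤ dist x d + dist d y := dist_triangle x d y
    _ ≤ 2 * R' := by rw [dist_comm d y]; linarith
  have hann : ∀ C ∈ B, C ⊆
      closedBall (0 : EuclideanSpace ℝ (Fin 2)) (R + 2 * R') \
        ball (0 : EuclideanSpace ℝ (Fin 2)) (R - 2 * R') := by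
    rintro C ⟨hC, y, hyC, hyS⟩ x hx
    have hdxy : dist x y ≤ 2 * R' := hdiam C hC x hx y hyC
    have hy0 : dist y (0 : EuclideanSpace ℝ (Fin 2)) = R := mem_sphere.mp hyS
    constructor
    · have := dist_triangle x y (0 : EuclideanSpace ℝ (Fin 2))
      exact mem_closedBall.mpr (by linarith)
    · simp only [mem_ball, not_lt]
      have := dist_triangle y x (0 : EuclideanSpace ℝ (Fin 2))
      rw [dist_comm y x] at this
      linarith
  choose! c hc using hin
  have hballC : ∀ C ∈ 𝒯, ball (c C) r ⊆ interior C := fun C hC =>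
    isOpen_ball.subset_interior_iff.mpr (ball_subset_closedBall.trans (hc C hC))
  have key : ∀ s : Finset (Set (EuclideanSpace ℝ (Fin 2))), ↑s ⊆ B →
      (s.card : ℝ) * r ^ 2 ≤ 8 * R' * R := by
    intro s hs
    set v := volume (ball (0 : EuclideanSpace ℝ (Fin 2)) 1) with hv
    have hv0 : v ≠ 0 := (Metric.measure_ball_pos volume _ one_pos).ne'
    have hvt : v ≠ ⊤ := measure_ball_lt_top.ne
    have hdisj2 : (↑s : Set (Set (EuclideanSpace ℝ (Fin 2)))).PairwiseDisjoint
        (fun C => ball (c C) r) := by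
      intro C hCs D hDs hne
      exact (hdisj (hs hCs).1 (hs hDs).1 hne).mono (hballC C (hs hCs).1) (hballC D (hs hDs).1)
    have hsum : volume (⋃ C ∈ s, ball (c C) r) = ∑ C ∈ s, volume (ball (c C) r) :=
      measure_biUnion_finset hdisj2 (fun _ _ => measurableSet_ball)
    have hsub : (⋃ C ∈ s, ball (c C) r) ⊆
        closedBall (0 : EuclideanSpace ℝ (Fin 2)) (R + 2 * R') \
          ball (0 : EuclideanSpace ℝ (Fin 2)) (R - 2 * R') := by
      simp only [iUnion_subset_iff]
      intro C hCs
      exact (ball_subset_closedBall.trans (hc C (hs hCs).1)).trans (hann C (hs hCs))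
    have hballval : ∀ C : Set (EuclideanSpace ℝ (Fin 2)),
        volume (ball (c C) r) = ENNReal.ofReal (r ^ 2) * v := by
      intro C
      rw [Measure.addHaar_ball volume _ hr.le, finrank_euclideanSpace_fin]
    have hannval : volume (closedBall (0 : EuclideanSpace ℝ (Fin 2)) (R + 2 * R') \
        ball (0 : EuclideanSpace ℝ (Fin 2)) (R - 2 * R')) ≤ ENNReal.ofReal (8 * R' * R) * v := by
      rw [measure_diff (ball_subset_closedBall.trans (closedBall_subset_closedBall (by linarith)))
        measurableSet_ball.nullMeasurableSet measure_ball_lt_top.ne]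
      rw [Measure.addHaar_closedBall volume _ (by linarith : (0:ℝ) ≤ R + 2 * R'),
        Measure.addHaar_ball volume _ (by linarith : (0:ℝ) ≤ R - 2 * R'),
        finrank_euclideanSpace_fin]
      rw [← ENNReal.sub_mul (fun _ _ => hvt), ← ENNReal.ofReal_sub _ (by positivity)]
      rw [show (R + 2 * R') ^ 2 - (R - 2 * R') ^ 2 = 8 * R' * R by ring]
    have hchain : ENNReal.ofReal ((s.card : ℝ) * r ^ 2) * v
        ≤ ENNReal.ofReal (8 * R' * R) * v := by
      calc ENNReal.ofReal ((s.card : ℝ) * r ^ 2) * v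
          = (s.card : ℝ≥0∞) * (ENNReal.ofReal (r ^ 2) * v) := by
            rw [ENNReal.ofReal_mul (by positivity), ENNReal.ofReal_natCast, mul_assoc]
      _ = ∑ C ∈ s, volume (ball (c C) r) := by
            rw [Finset.sum_congr rfl (fun C _ => hballval C), Finset.sum_const, nsmul_eq_mul]
      _ = volume (⋃ C ∈ s, ball (c C) r) := hsum.symm
      _ ≤ ENNReal.ofReal (8 * R' * R) * v := le_trans (measure_mono hsub) hannval
    have h2 := (ENNReal.mul_le_mul_iff_left hv0 hvt).mp hchain
    exact (ENNReal.ofReal_le_ofReal_iff (by positivity)).mp h2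
  have hfin : B.Finite := by
    by_contra hinf
    have hinf' : B.Infinite := hinf
    obtain ⟨s, hsB, hcard⟩ :=
      hinf'.exists_subset_card_eq (⌈8 * R' * R / r ^ 2⌉₊ + 1)
    have h1 := key s hsB
    rw [hcard] at h1
    push_cast at h1
    have h3 : 8 * R' * R / r ^ 2 ≤ (⌈8 * R' * R / r ^ 2⌉₊ : ℝ) := Nat.le_ceil _
    have h4 : 8 * R' * R / r ^ 2 * r ^ 2 = 8 * R' * R := div_mul_cancel₀ _ (by positivity)
    nlinarith [sq_nonneg r]
  have hncard : B.ncard = hfin.toFinset.card := Set.ncard_eq_toFinset_card B hfin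
  have hub : (B.ncard : ℝ) ≤ 8 * R' * R / r ^ 2 := by
    rw [le_div_iff₀ (by positivity : (0:ℝ) < r ^ 2), hncard]
    exact key hfin.toFinset (by simp)
  refine ⟨hfin, hub, ?_⟩
  -- lower bound
  have hRRlt : R' / R < 1 := by rw [div_lt_one hR0]; linarith
  set δ := Real.arcsin (R' / R) with hδdef
  have hδ0 : 0 < δ := Real.arcsin_pos.mpr (div_pos hr' hR0)
  have hδ6 : δ ≤ Real.pi / 6 := by
    have h12 : R' / R ≤ 1 / 2 := by
      rw [div_le_div_iff₀ hR0 (by norm_num : (0:ℝ) < 2)]; linarith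
    calc δ ≤ Real.arcsin (1 / 2) := Real.monotone_arcsin h12
    _ = Real.pi / 6 := by
        rw [← Real.sin_pi_div_six,
          Real.arcsin_sin (by linarith [Real.pi_pos]) (by linarith [Real.pi_pos])]
  have hsinδ : Real.sin δ = R' / R := Real.sin_arcsin (by linarith [div_pos hr' hR0]) hRRlt.le
  have hchord : ∀ C ∈ 𝒯, ∀ s t : ℝ, ph R s ∈ C → ph R t ∈ C → |s - t| ≤ Real.pi →
      |s - t| ≤ 2 * δ := by
    intro C hC s t hs ht hst
    have hd : dist (ph R s) (ph R t) ≤ 2 * R' := hdiam C hC _ hs _ ht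
    rw [ph_dist R s t hR0.le] at hd
    have h1 : |Real.sin ((s - t) / 2)| ≤ R' / R := by
      rw [le_div_iff₀ hR0]
      nlinarith [abs_nonneg (Real.sin ((s - t) / 2))]
    have h2 : Real.sin (|s - t| / 2) ≤ R' / R := by rw [← abs_sin_half hst]; exact h1
    have h3 : |s - t| / 2 ≤ δ := by
      have harc : Real.arcsin (Real.sin (|s - t| / 2)) = |s - t| / 2 :=
        Real.arcsin_sin (by linarith [abs_nonneg (s - t), Real.pi_pos]) (by linarith)
      rw [← harc, hδdef]
      exact Real.monotone_arcsin h2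
    linarith
  set T : Set (EuclideanSpace ℝ (Fin 2)) → Set ℝ :=
    fun C => Icc (-Real.pi) Real.pi ∩ (ph R) ⁻¹' C with hTdef
  have hTsub : Ioc (-Real.pi) Real.pi ⊆ ⋃ C ∈ hfin.toFinset, T C := by
    intro t ht
    have hmem : ph R t ∈ ⋃₀ 𝒯 := by rw [hunion]; trivial
    obtain ⟨C, hC, hmemC⟩ := hmem
    have hCB : C ∈ B := ⟨hC, ph R t, hmemC, mem_sphere_zero_iff_norm.mpr (ph_norm R t hR0.le)⟩
    exact mem_biUnion (hfin.mem_toFinset.mpr hCB) ⟨Ioc_subset_Icc_self ht, hmemC⟩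
  have hTbound : ∀ C ∈ B, volume (T C) ≤ ENNReal.ofReal (2 * δ) := by
    intro C hCB
    rcases (T C).eq_empty_or_nonempty with he | hne
    · rw [he]; simp
    have hTclosed : IsClosed (T C) :=
      isClosed_Icc.inter ((hcp C hCB.1).isClosed.preimage (ph_cont R))
    have hbdd : BddBelow (T C) := bddBelow_Icc.mono inter_subset_left
    set t₀ := sInf (T C) with ht₀def
    have ht₀ : t₀ ∈ T C := hTclosed.csInf_mem hne hbdd
    have hstep : ∀ t ∈ T C, t ≤ t₀ + 2 * δ ∨ t₀ + 2 * Real.pi - 2 * δ ≤ t := by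
      intro t ht
      have hle : t₀ ≤ t := csInf_le hbdd ht
      rcases le_or_gt (t - t₀) Real.pi with hcase | hcase
      · left
        have h := hchord C hCB.1 t t₀ ht.2 ht₀.2 (by rw [abs_of_nonneg (by linarith)]; exact hcase)
        rw [abs_of_nonneg (by linarith)] at h
        linarith
      · right
        have hm : ph R (t - 2 * Real.pi) ∈ C := by rw [ph_periodic]; exact ht.2
        have habs : |t₀ - (t - 2 * Real.pi)| ≤ Real.pi := by
          rw [abs_of_nonneg (by linarith [ht.1.2, ht₀.1.1])]
          linarith [ht.1.2, ht₀.1.1]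
        have h := hchord C hCB.1 t₀ (t - 2 * Real.pi) ht₀.2 hm habs
        rw [abs_of_nonneg (by linarith [ht.1.2, ht₀.1.1])] at h
        linarith
    rcases (T C ∩ Icc (t₀ + 2 * Real.pi - 2 * δ) Real.pi).eq_empty_or_nonempty with hP2 | hP2
    · have hTsub2 : T C ⊆ Icc t₀ (t₀ + 2 * δ) := by
        intro t ht
        refine ⟨csInf_le hbdd ht, ?_⟩
        rcases hstep t ht with h | h
        · exact h
        · exact absurd (Set.eq_empty_iff_forall_notMem.mp hP2 t ⟨ht, h, ht.1.2⟩) (fun q => q)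
      calc volume (T C) ≤ volume (Icc t₀ (t₀ + 2 * δ)) := measure_mono hTsub2
      _ = ENNReal.ofReal (2 * δ) := by rw [Real.volume_Icc]; congr 1; ring
    · have hP2closed : IsClosed (T C ∩ Icc (t₀ + 2 * Real.pi - 2 * δ) Real.pi) :=
        hTclosed.inter isClosed_Icc
      have hP2bdd : BddBelow (T C ∩ Icc (t₀ + 2 * Real.pi - 2 * δ) Real.pi) :=
        hbdd.mono inter_subset_left
      set u := sInf (T C ∩ Icc (t₀ + 2 * Real.pi - 2 * δ) Real.pi) with hudef
      have hu : u ∈ T C ∩ Icc (t₀ + 2 * Real.pi - 2 * δ) Real.pi :=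
        hP2closed.csInf_mem hP2 hP2bdd
      have hu1 : t₀ + 2 * Real.pi - 2 * δ ≤ u := hu.2.1
      have hu2 : u ≤ Real.pi := hu.2.2
      have humem : ph R (u - 2 * Real.pi) ∈ C := by rw [ph_periodic]; exact hu.1.2
      have hTsub2 : T C ⊆ Icc t₀ (u - 2 * Real.pi + 2 * δ) ∪ Icc u Real.pi := by
        intro t ht
        rcases hstep t ht with h | h
        · left
          refine ⟨csInf_le hbdd ht, ?_⟩
          have habs : |t - (u - 2 * Real.pi)| ≤ Real.pi := by
            rw [abs_of_nonneg (by linarith [ht.1.1])]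
            linarith [Real.pi_pos, hδ6]
          have hh := hchord C hCB.1 t (u - 2 * Real.pi) ht.2 humem habs
          rw [abs_of_nonneg (by linarith [ht.1.1])] at hh
          linarith
        · right
          exact ⟨csInf_le hP2bdd ⟨ht, h, ht.1.2⟩, ht.1.2⟩
      calc volume (T C)
          ≤ volume (Icc t₀ (u - 2 * Real.pi + 2 * δ) ∪ Icc u Real.pi) := measure_mono hTsub2
      _ ≤ volume (Icc t₀ (u - 2 * Real.pi + 2 * δ)) + volume (Icc u Real.pi) :=
          measure_union_le _ _
      _ = ENNReal.ofReal ((u - 2 * Real.pi + 2 * δ) - t₀) + ENNReal.ofReal (Real.pi - u) := by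
          rw [Real.volume_Icc, Real.volume_Icc]
      _ = ENNReal.ofReal (((u - 2 * Real.pi + 2 * δ) - t₀) + (Real.pi - u)) :=
          (ENNReal.ofReal_add (by linarith) (by linarith)).symm
      _ ≤ ENNReal.ofReal (2 * δ) := ENNReal.ofReal_le_ofReal (by linarith [ht₀.1.1])
  have hsum2 : ENNReal.ofReal (2 * Real.pi)
      ≤ (hfin.toFinset.card : ℝ≥0∞) * ENNReal.ofReal (2 * δ) := by
    calc ENNReal.ofReal (2 * Real.pi) = volume (Ioc (-Real.pi) Real.pi) := by
          rw [Real.volume_Ioc]; congr 1; ring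
    _ ≤ volume (⋃ C ∈ hfin.toFinset, T C) := measure_mono hTsub
    _ ≤ ∑ C ∈ hfin.toFinset, volume (T C) := measure_biUnion_finset_le _ _
    _ ≤ ∑ C ∈ hfin.toFinset, ENNReal.ofReal (2 * δ) :=
        Finset.sum_le_sum (fun C hC => hTbound C (hfin.mem_toFinset.mp hC))
    _ = (hfin.toFinset.card : ℝ≥0∞) * ENNReal.ofReal (2 * δ) := by
        rw [Finset.sum_const, nsmul_eq_mul]
  have hreal : 2 * Real.pi ≤ (B.ncard : ℝ) * (2 * δ) := by
    have h1 : (hfin.toFinset.card : ℝ≥0∞) * ENNReal.ofReal (2 * δ)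
        = ENNReal.ofReal ((B.ncard : ℝ) * (2 * δ)) := by
      rw [ENNReal.ofReal_mul (show (0:ℝ) ≤ (B.ncard : ℝ) from Nat.cast_nonneg _),
        ENNReal.ofReal_natCast, hncard]
    rw [h1] at hsum2
    exact (ENNReal.ofReal_le_ofReal_iff
      (mul_nonneg (Nat.cast_nonneg _) (by linarith))).mp hsum2
  rw [div_le_iff₀ hδ0]
  linarith
end

section
/- For every convex disk K in the plane, the inradius of K is at least one third of its minimal width: ir(K) ≥ w(K)/3. -/
open Metric Set RealInnerProductSpace

noncomputable section Stmt9Aux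

local notation "E2" => EuclideanSpace ℝ (Fin 2)

/-- support function -/
def sf (K : Set E2) (u : E2) : ℝ := sSup ((fun x => ⟪u, x⟫) '' K)

/-- the set of widths -/
def wset (K : Set E2) : Set ℝ :=
  {d : ℝ | ∃ u : E2, ‖u‖ = 1 ∧
    d = sSup ((fun x => ⟪u, x⟫) '' K) - sInf ((fun x => ⟪u, x⟫) '' K)}

/-- minimal width -/
def wK (K : Set E2) : ℝ := sInf (wset K)

variable {K : Set E2}

lemma inner_cont (u : E2) : Continuous (fun x : E2 => ⟪u, x⟫) :=
  continuous_const.inner continuous_id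

lemma sf_bound (hcp : IsCompact K) (u : E2) {x : E2} (hx : x ∈ K) :
    ⟪u, x⟫ ≤ sf K u :=
  le_csSup (hcp.bddAbove_image (inner_cont u).continuousOn) ⟨x, hx, rfl⟩

lemma sf_le (hne : K.Nonempty) {u : E2} {c : ℝ} (h : ∀ x ∈ K, ⟪u, x⟫ ≤ c) :
    sf K u ≤ c :=
  csSup_le (hne.image _) (by rintro _ ⟨x, hx, rfl⟩; exact h x hx)

lemma image_neg_inner (u : E2) :
    (fun x : E2 => ⟪u, x⟫) '' K = -((fun x : E2 => ⟪-u, x⟫) '' K) := by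
  ext y
  simp only [Set.mem_neg, Set.mem_image, inner_neg_left]
  constructor
  · rintro ⟨x, hx, rfl⟩; exact ⟨x, hx, by ring⟩
  · rintro ⟨x, hx, hxy⟩; exact ⟨x, hx, by linarith⟩

lemma sf_sInf_image (u : E2) :
    sInf ((fun x : E2 => ⟪u, x⟫) '' K) = -sf K (-u) := by
  rw [image_neg_inner u, Real.sInf_def, neg_neg, sf]

lemma wd_mem {u : E2} (hu : ‖u‖ = 1) : sf K u + sf K (-u) ∈ wset K := by
  refine ⟨u, hu, ?_⟩
  rw [sf_sInf_image u, sub_neg_eq_add]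
  rfl

lemma wset_lb (hcp : IsCompact K) :
    ∀ d ∈ wset K, (0:ℝ) ≤ d := by
  rintro d ⟨u, hu, rfl⟩
  have h1 : sInf ((fun x : E2 => ⟪u, x⟫) '' K) ≤ sSup ((fun x : E2 => ⟪u, x⟫) '' K) :=
    Real.sInf_le_sSup _ (hcp.bddBelow_image (inner_cont u).continuousOn)
      (hcp.bddAbove_image (inner_cont u).continuousOn)
  linarith

lemma wK_nonneg (hcp : IsCompact K) : 0 ≤ wK K :=
  le_csInf ⟨_, wd_mem (K := K) (u := EuclideanSpace.single 0 1)
    (by simp [EuclideanSpace.norm_single])⟩ (wset_lb hcp)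

lemma wK_le (hcp : IsCompact K) {u : E2} (hu : ‖u‖ = 1) :
    wK K ≤ sf K u + sf K (-u) :=
  csInf_le ⟨0, wset_lb hcp⟩ (wd_mem hu)

/-- key support-function inequality -/
lemma L3 (hcp : IsCompact K) (hne : K.Nonempty) {a b c : E2} {α β γ : ℝ}
    (ha : ‖a‖ = 1) (hα : 1/3 ≤ α) (hβ : 0 ≤ β) (hγ : 0 ≤ γ)
    (hsum : α • a + β • b + γ • c = 0) :
    wK K / 3 ≤ α * sf K a + β * sf K b + γ * sf K c := by
  have hα0 : (0:ℝ) < α := by linarith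
  have hkey : sf K (-a) ≤ (β * sf K b + γ * sf K c) / α := by
    refine sf_le hne fun x hx => ?_
    rw [le_div_iff₀ hα0]
    have h1 : ⟪α • a + β • b + γ • c, x⟫ = (0:ℝ) := by rw [hsum, inner_zero_left]
    simp only [inner_add_left, real_inner_smul_left] at h1
    have hb := sf_bound hcp b hx
    have hc := sf_bound hcp c hx
    have h2 : ⟪-a, x⟫ * α = β * ⟪b, x⟫ + γ * ⟪c, x⟫ := by
      rw [inner_neg_left]; linarith
    nlinarith [mul_le_mul_of_nonneg_left hb hβ, mul_le_mul_of_nonneg_left hc hγ]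
  have hw := wK_le hcp ha
  have hw0 := wK_nonneg hcp
  have h2 : α * sf K (-a) ≤ β * sf K b + γ * sf K c := by
    rw [le_div_iff₀ hα0] at hkey; linarith [hkey]
  nlinarith [mul_le_mul_of_nonneg_left hw hα0.le]

lemma escape_aux (hcp : IsCompact K) {ρ t : ℝ} (hρ : 0 ≤ ρ) (ht : 0 < t)
    {p v u : E2} (hp : p ∈ K) (h : ⟪u, v⟫ ≤ -t) :
    ⟪u, p + (ρ/t) • v⟫ ≤ sf K u - ρ := by
  rw [inner_add_right, real_inner_smul_right]
  have hb := sf_bound hcp u hp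
  have h1 : (ρ/t) * ⟪u, v⟫ ≤ (ρ/t) * (-t) :=
    mul_le_mul_of_nonneg_left h (div_nonneg hρ ht.le)
  have h2 : (ρ/t) * (-t) = -ρ := by field_simp
  linarith

/-- escape construction -/
lemma escape (hcp : IsCompact K) {ρ : ℝ} (hρ : 0 ≤ ρ) {p : E2} (hp : p ∈ K)
    {u1 u2 u3 v : E2} {t : ℝ} (ht : 0 < t)
    (h1 : ⟪u1, v⟫ ≤ -t) (h2 : ⟪u2, v⟫ ≤ -t) (h3 : ⟪u3, v⟫ ≤ -t) :
    ∃ x, ⟪u1, x⟫ ≤ sf K u1 - ρ ∧ ⟪u2, x⟫ ≤ sf K u2 - ρ ∧ ⟪u3, x⟫ ≤ sf K u3 - ρ :=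
  ⟨p + (ρ/t) • v, escape_aux hcp hρ ht hp h1, escape_aux hcp hρ ht hp h2,
    escape_aux hcp hρ ht hp h3⟩

/-- two-vector lemma -/
lemma L2 (hcp : IsCompact K) (hne : K.Nonempty) {u v : E2}
    (hu : ‖u‖ = 1) (hv : ‖v‖ = 1) :
    ∃ x, ⟪u, x⟫ ≤ sf K u - wK K / 3 ∧ ⟪v, x⟫ ≤ sf K v - wK K / 3 := by
  set ρ := wK K / 3 with hρdef
  have hw0 := wK_nonneg hcp
  have hρ0 : 0 ≤ ρ := by linarith
  by_cases hvu : v = u ∨ v = -u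
  · refine ⟨(sf K u - ρ) • u, ?_, ?_⟩
    · rw [real_inner_smul_right, real_inner_self_eq_norm_sq, hu]; ring_nf; rfl
    · rcases hvu with rfl | rfl
      · rw [real_inner_smul_right, real_inner_self_eq_norm_sq, hu]; ring_nf; rfl
      · rw [real_inner_smul_right, inner_neg_left, real_inner_self_eq_norm_sq, hu]
        have hwle := wK_le hcp hu
        have : wK K = 3 * ρ := by rw [hρdef]; ring
        nlinarith
  · push_neg at hvu
    obtain ⟨hvu1, hvu2⟩ := hvu
    obtain ⟨p, hp⟩ := hne
    have hne0 : u + v ≠ 0 := fun h => hvu2 (by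
      have : v = -u := by linear_combination (norm := module) h
      exact this)
    have hpos : (0:ℝ) < 1 + ⟪u, v⟫ := by
      have h1 : ‖u + v‖ ^ 2 = ‖u‖^2 + 2 * ⟪u, v⟫ + ‖v‖^2 := norm_add_sq_real u v
      have h2 : 0 < ‖u + v‖ ^ 2 := by
        have := norm_pos_iff.mpr hne0
        positivity
      rw [hu, hv] at h1; nlinarith
    have hu' : ⟪u, -(u+v)⟫ ≤ -(1 + ⟪u, v⟫) := by
      rw [inner_neg_right, inner_add_right, real_inner_self_eq_norm_sq, hu]; ring_nf; rfl
    have hv' : ⟪v, -(u+v)⟫ ≤ -(1 + ⟪u, v⟫) := by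
      rw [inner_neg_right, inner_add_right, real_inner_self_eq_norm_sq, hv,
        real_inner_comm v u]
      ring_nf; rfl
    obtain ⟨x, hx1, hx2, _⟩ := escape hcp hρ0 hp hpos hu' hv' hv'
    exact ⟨x, hx1, hx2⟩

lemma circle_det {A1 B1 A2 B2 A3 B3 : ℝ}
    (h1 : A1^2 + B1^2 = 1) (h2 : A2^2 + B2^2 = 1) (h3 : A3^2 + B3^2 = 1)
    (hD : A1*B2 - A2*B1 + A2*B3 - A3*B2 + A3*B1 - A1*B3 = 0) :
    ((A1-A2)^2 + (B1-B2)^2) * (((A1-A3)^2 + (B1-B3)^2) * ((A2-A3)^2 + (B2-B3)^2)) = 0 := by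
  linear_combination (norm := ring_nf) (4*(A1*B2 - A2*B1 + A2*B3 - A3*B2 + A3*B1 - A1*B3))*hD - ((3)*B3^2 + (-1)*B3^4 + (-1)*A3^2 + (-2)*A3^2*B3^2 + (-1)*A3^4 + (-6)*B2*B3 + (2)*B2*B3^3 + (2)*B2*A3^2*B3 + (3)*B2^2 + (-2)*B2^2*B3^2 + (-2)*B2^2*A3^2 + (2)*B2^3*B3 + (-1)*B2^4 + (2)*A2*A3 + (-2)*A2*A3*B3^2 + (-2)*A2*A3^3 + (8)*A2*B2*A3*B3 + (-2)*A2*B2^2*A3 + (-1)*A2^2 + (-2)*A2^2*B3^2 + (6)*A2^2*A3^2 + (2)*A2^2*B2*B3 + (-2)*A2^2*B2^2 + (-2)*A2^3*A3 + (-1)*A2^4 + (2)*B1*B3^3 + (2)*B1*A3^2*B3 + (-2)*B1*B2*B3^2 + (2)*B1*B2*A3^2 + (-2)*B1*B2^2*B3 + (2)*B1*B2^3 + (-4)*B1*A2*A3*B3 + (-4)*B1*A2*B2*A3 + (2)*B1*A2^2*B3 + (2)*B1*A2^2*B2 + (-1)*B1^2*B3^2 + (-1)*B1^2*A3^2 +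 (2)*B1^2*B2*B3 + (-1)*B1^2*B2^2 + (2)*B1^2*A2*A3 + (-1)*B1^2*A2^2 + (2)*A1*A3*B3^2 + (2)*A1*A3^3 + (-4)*A1*B2*A3*B3 + (2)*A1*B2^2*A3 + (2)*A1*A2*B3^2 + (-2)*A1*A2*A3^2 + (-4)*A1*A2*B2*B3 + (2)*A1*A2*B2^2 + (-2)*A1*A2^2*A3 + (2)*A1*A2^3 + (-1)*A1^2*B3^2 + (-1)*A1^2*A3^2 + (2)*A1^2*B2*B3 + (-1)*A1^2*B2^2 + (2)*A1^2*A2*A3 + (-1)*A1^2*A2^2)*h1 - ((-2) + (1)*B3^2 + (-1)*B3^4 + (5)*A3^2 + (-2)*A3^2*B3^2 + (-1)*A3^4 + (2)*B2*B3 + (2)*B2*B3^3 + (2)*B2*A3^2*B3 + (-1)*B2^2 + (-1)*B2^2*B3^2 + (-1)*B2^2*A3^2 + (-2)*A2*A3 + (2)*A2*A3*B3^2 + (2)*A2*A3^3 + (-1)*A2^2 + (-1)*A2^2*B3^2 + (-1)*A2^2*A3^2 + (-4)*B1*B3 + (2)*B1*B3^3 + (2)*B1*A3^2*B3 + (2)*B1*B2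 + (-2)*B1*B2*B3^2 + (2)*B1*B2*A3^2 + (2)*B1*B2^2*B3 + (-4)*B1*A2*A3*B3 + (2)*B1*A2^2*B3 + (4)*B1^2 + (-8)*B1^2*A3^2 + (-4)*B1^2*B2*B3 + (4)*B1^2*A2*A3 + (-2)*A1*A3*B3^2 + (-2)*A1*A3^3 + (-4)*A1*B2*A3*B3 + (2)*A1*B2^2*A3 + (2)*A1*A2 + (2)*A1*A2*B3^2 + (-2)*A1*A2*A3^2 + (2)*A1*A2^2*A3 + (8)*A1*B1*A3*B3 + (-4)*A1*B1*B2*A3 + (-4)*A1*B1*A2*B3)*h2 - ((2) + (-2)*B3^2 + (-2)*A3^2 + (4)*B2*B3 + (-4)*B2^2 + (4)*B1*B3 + (-2)*B1*B2 + (2)*B1*B2*B3^2 + (2)*B1*B2*A3^2 + (-4)*B1*B2^2*B3 + (-4)*B1*A2*B2*A3 + (-4)*B1^2 + (-4)*B1^2*B2*B3 + (8)*B1^2*B2^2 + (4)*B1^2*A2*A3 + (4)*A1*B2^2*A3 + (-2)*A1*A2 + (2)*A1*A2*B3^2 + (2)*A1*A2*A3^2 + (-4)*A1*A2*B2*B3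 + (-4)*A1*B1*B2*A3 + (-4)*A1*B1*A2*B3 + (8)*A1*B1*A2*B2)*h3

lemma det_ne_zero {A1 B1 A2 B2 A3 B3 : ℝ}
    (h1 : A1^2 + B1^2 = 1) (h2 : A2^2 + B2^2 = 1) (h3 : A3^2 + B3^2 = 1)
    (d12 : (A1-A2)^2 + (B1-B2)^2 ≠ 0) (d13 : (A1-A3)^2 + (B1-B3)^2 ≠ 0)
    (d23 : (A2-A3)^2 + (B2-B3)^2 ≠ 0) :
    A1*B2 - A2*B1 + A2*B3 - A3*B2 + A3*B1 - A1*B3 ≠ 0 := by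
  intro hD
  have := circle_det h1 h2 h3 hD
  rcases mul_eq_zero.mp this with h | h
  · exact d12 h
  rcases mul_eq_zero.mp h with h | h
  · exact d13 h
  · exact d23 h

lemma inner_coords (u x : E2) : ⟪u, x⟫ = u 0 * x 0 + u 1 * x 1 := by
  simp [PiLp.inner_apply, Fin.sum_univ_two, RCLike.inner_apply, conj_trivial]; ring

lemma unit_coords {u : E2} (hu : ‖u‖ = 1) : (u 0)^2 + (u 1)^2 = 1 := by
  have h := EuclideanSpace.norm_eq u
  rw [hu] at h
  have h2 : (∑ i : Fin 2, ‖u i‖^2) = 1 := Real.sqrt_eq_one.mp h.symm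
  rw [Fin.sum_univ_two] at h2
  simpa [Real.norm_eq_abs, sq_abs] using h2

lemma coords_ne {u v : E2} (h : u ≠ v) : (u 0 - v 0)^2 + (u 1 - v 1)^2 ≠ 0 := by
  intro h0
  apply h
  have h1 : u 0 = v 0 := by nlinarith [sq_nonneg (u 0 - v 0), sq_nonneg (u 1 - v 1)]
  have h2 : u 1 = v 1 := by nlinarith [sq_nonneg (u 0 - v 0), sq_nonneg (u 1 - v 1)]
  apply PiLp.ext
  intro i
  fin_cases i
  · exact h1
  · exact h2

/-- the triple-constraint lemma -/
lemma L1 (hcp : IsCompact K) (hcv : Convex ℝ K) (hne : K.Nonempty) {u1 u2 u3 : E2}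
    (h1 : ‖u1‖ = 1) (h2 : ‖u2‖ = 1) (h3 : ‖u3‖ = 1) :
    ∃ x, ⟪u1, x⟫ ≤ sf K u1 - wK K / 3 ∧ ⟪u2, x⟫ ≤ sf K u2 - wK K / 3 ∧
      ⟪u3, x⟫ ≤ sf K u3 - wK K / 3 := by
  classical
  by_cases e12 : u1 = u2
  · rcases e12 with rfl
    obtain ⟨x, ha, hb⟩ := L2 hcp hne h1 h3
    exact ⟨x, ha, ha, hb⟩
  by_cases e13 : u1 = u3
  · rcases e13 with rfl
    obtain ⟨x, ha, hb⟩ := L2 hcp hne h1 h2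
    exact ⟨x, ha, hb, ha⟩
  by_cases e23 : u2 = u3
  · rcases e23 with rfl
    obtain ⟨x, ha, hb⟩ := L2 hcp hne h1 h2
    exact ⟨x, ha, hb, hb⟩
  -- all distinct
  set ρ := wK K / 3 with hρdef
  have hw0 := wK_nonneg hcp
  have hρ0 : 0 ≤ ρ := by rw [hρdef]; linarith
  by_cases h0 : (0:E2) ∈ convexHull ℝ ({u1, u2, u3} : Set E2)
  · -- the linear system case
    set A1 := u1 0; set B1 := u1 1
    set A2 := u2 0; set B2 := u2 1
    set A3 := u3 0; set B3 := u3 1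
    have hc1 : A1^2 + B1^2 = 1 := unit_coords h1
    have hc2 : A2^2 + B2^2 = 1 := unit_coords h2
    have hc3 : A3^2 + B3^2 = 1 := unit_coords h3
    have hD : A1*B2 - A2*B1 + A2*B3 - A3*B2 + A3*B1 - A1*B3 ≠ 0 :=
      det_ne_zero hc1 hc2 hc3 (coords_ne e12) (coords_ne e13) (coords_ne e23)
    set D := A1*B2 - A2*B1 + A2*B3 - A3*B2 + A3*B1 - A1*B3 with hDdef
    set H1 := sf K u1; set H2 := sf K u2; set H3 := sf K u3
    set X0 := (H1*(B2-B3) + H2*(B3-B1) + H3*(B1-B2))/D with hX0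
    set X1 := (H1*(A3-A2) + H2*(A1-A3) + H3*(A2-A1))/D with hX1
    set R := (H1*(A2*B3-A3*B2) + H2*(A3*B1-A1*B3) + H3*(A1*B2-A2*B1))/D with hR
    have e1 : A1*X0 + B1*X1 + R = H1 := by
      rw [hX0, hX1, hR]; field_simp; ring
    have e2 : A2*X0 + B2*X1 + R = H2 := by
      rw [hX0, hX1, hR]; field_simp; ring
    have e3 : A3*X0 + B3*X1 + R = H3 := by
      rw [hX0, hX1, hR]; field_simp; ring
    -- extract convex weights
    have hsetfin : ({u1, u2, u3} : Set E2) = (({u1, u2, u3} : Finset E2) : Set E2) := by simp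
    rw [hsetfin, Finset.convexHull_eq] at h0
    obtain ⟨wf, hw0', hwsum, hwc⟩ := h0
    have hm1 : u1 ∉ ({u2, u3} : Finset E2) := by simp [e12, e13]
    have hm2 : u2 ∉ ({u3} : Finset E2) := by simp [e23]
    set μ1 := wf u1; set μ2 := wf u2; set μ3 := wf u3
    have hμ1 : 0 ≤ μ1 := hw0' u1 (by simp)
    have hμ2 : 0 ≤ μ2 := hw0' u2 (by simp)
    have hμ3 : 0 ≤ μ3 := hw0' u3 (by simp)
    have hμsum : μ1 + μ2 + μ3 = 1 := by
      rw [show ({u1, u2, u3} : Finset E2) = insert u1 (insert u2 {u3}) from rfl,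
        Finset.sum_insert hm1, Finset.sum_insert hm2, Finset.sum_singleton] at hwsum
      linarith [hwsum]
    have hvec : μ1 • u1 + μ2 • u2 + μ3 • u3 = 0 := by
      have := Finset.centerMass_eq_of_sum_1 _ id hwsum
      rw [hwc] at this
      rw [show ({u1, u2, u3} : Finset E2) = insert u1 (insert u2 {u3}) from rfl,
        Finset.sum_insert hm1, Finset.sum_insert hm2, Finset.sum_singleton] at this
      simpa [add_assoc] using this.symm
    have hca : μ1*A1 + μ2*A2 + μ3*A3 = 0 := by
      have := congrArg (fun z : E2 => z 0) hvec
      simpa [PiLp.add_apply, PiLp.smul_apply, smul_eq_mul] using this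
    have hcb : μ1*B1 + μ2*B2 + μ3*B3 = 0 := by
      have := congrArg (fun z : E2 => z 1) hvec
      simpa [PiLp.add_apply, PiLp.smul_apply, smul_eq_mul] using this
    have hRsum : R = μ1*H1 + μ2*H2 + μ3*H3 := by
      linear_combination μ1*e1 + μ2*e2 + μ3*e3 - X0*hca - X1*hcb - R*hμsum
    have hRρ : ρ ≤ R := by
      have hmax : 1/3 ≤ μ1 ∨ 1/3 ≤ μ2 ∨ 1/3 ≤ μ3 := by
        by_contra hcon
        push_neg at hcon
        obtain ⟨q1, q2, q3⟩ := hcon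
        linarith
      rcases hmax with hm | hm | hm
      · have := L3 hcp hne h1 hm hμ2 hμ3 hvec
        rw [hρdef]; linarith [this, hRsum]
      · have hvec' : μ2 • u2 + μ1 • u1 + μ3 • u3 = 0 := by
          linear_combination (norm := module) hvec
        have := L3 hcp hne h2 hm hμ1 hμ3 hvec'
        rw [hρdef]; linarith [this, hRsum]
      · have hvec' : μ3 • u3 + μ1 • u1 + μ2 • u2 = 0 := by
          linear_combination (norm := module) hvec
        have := L3 hcp hne h3 hm hμ1 hμ2 hvec'
        rw [hρdef]; linarith [this, hRsum]
    refine ⟨(WithLp.equiv 2 (Fin 2 → ℝ)).symm ![X0, X1], ?_, ?_, ?_⟩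
    · rw [inner_coords]
      simp only [WithLp.equiv_symm_apply, PiLp.toLp_apply, Matrix.cons_val_zero, Matrix.cons_val_one,
        Matrix.head_cons]
      linarith [e1, hRρ]
    · rw [inner_coords]
      simp only [WithLp.equiv_symm_apply, PiLp.toLp_apply, Matrix.cons_val_zero, Matrix.cons_val_one,
        Matrix.head_cons]
      linarith [e2, hRρ]
    · rw [inner_coords]
      simp only [WithLp.equiv_symm_apply, PiLp.toLp_apply, Matrix.cons_val_zero, Matrix.cons_val_one,
        Matrix.head_cons]
      linarith [e3, hRρ]
  · -- separation case
    have hfin : ({u1, u2, u3} : Set E2).Finite := Set.toFinite _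
    have hcl : IsClosed (convexHull ℝ ({u1, u2, u3} : Set E2)) :=
      (hfin.isCompact_convexHull ℝ).isClosed
    obtain ⟨f, m, hf0, hfb⟩ :=
      geometric_hahn_banach_point_closed (convex_convexHull ℝ _) hcl h0
    rw [map_zero] at hf0
    set v := -(InnerProductSpace.toDual ℝ E2).symm f with hv
    have hinner : ∀ y : E2, y ∈ ({u1, u2, u3} : Set E2) → ⟪y, v⟫ ≤ -m := by
      intro y hy
      have hfy : m < f y := hfb y (subset_convexHull ℝ _ hy)
      rw [hv, real_inner_comm, inner_neg_left, InnerProductSpace.toDual_symm_apply]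
      linarith
    obtain ⟨p, hp⟩ := hne
    exact escape hcp hρ0 hp hf0 (hinner u1 (by simp)) (hinner u2 (by simp))
      (hinner u3 (by simp))

lemma norm_le_coords (x : E2) : ‖x‖ ≤ |x 0| + |x 1| := by
  rw [EuclideanSpace.norm_eq, Fin.sum_univ_two]
  have h : ‖x 0‖^2 + ‖x 1‖^2 ≤ (|x 0| + |x 1|)^2 := by
    simp only [Real.norm_eq_abs]
    nlinarith [abs_nonneg (x 0), abs_nonneg (x 1)]
  calc √(‖x 0‖^2 + ‖x 1‖^2) ≤ √((|x 0| + |x 1|)^2) := Real.sqrt_le_sqrt h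
    _ = |x 0| + |x 1| := Real.sqrt_sq (by positivity)

lemma H_convex (K : Set E2) (ρ : ℝ) (u : E2) :
    Convex ℝ {x : E2 | ⟪u, x⟫ ≤ sf K u - ρ} := by
  refine convex_halfSpace_le ?_ _
  exact { map_add := fun x y => inner_add_right u x y,
          map_smul := fun c x => by rw [real_inner_smul_right]; rfl }

lemma H_closed (K : Set E2) (ρ : ℝ) (u : E2) :
    IsClosed {x : E2 | ⟪u, x⟫ ≤ sf K u - ρ} :=
  isClosed_le (inner_cont u) continuous_const

set_option maxHeartbeats 2000000 in
/-- the main incenter existence result -/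
lemma main (hcp : IsCompact K) (hcv : Convex ℝ K) (hne : K.Nonempty) :
    ∃ c : E2, Metric.closedBall c (wK K / 3) ⊆ K := by
  classical
  set ρ := wK K / 3 with hρdef
  have hw0 := wK_nonneg hcp
  have hρ0 : 0 ≤ ρ := by rw [hρdef]; linarith
  set H : E2 → Set E2 := fun u => {x : E2 | ⟪u, x⟫ ≤ sf K u - ρ} with hHdef
  -- three fixed unit vectors positively spanning the plane
  set v0 : E2 := EuclideanSpace.single 0 1 with hv0
  set v1 : E2 := EuclideanSpace.single 1 1 with hv1
  set v2 : E2 := (WithLp.equiv 2 (Fin 2 → ℝ)).symm ![-(3/5), -(4/5)] with hv2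
  have hv20 : v2 0 = -(3/5) := by rw [hv2]; rfl
  have hv21 : v2 1 = -(4/5) := by rw [hv2]; rfl
  have hn0 : ‖v0‖ = 1 := by simp [hv0, EuclideanSpace.norm_single]
  have hn1 : ‖v1‖ = 1 := by simp [hv1, EuclideanSpace.norm_single]
  have hn2 : ‖v2‖ = 1 := by
    rw [EuclideanSpace.norm_eq, Fin.sum_univ_two, hv20, hv21]
    rw [show ‖(-(3/5) : ℝ)‖^2 + ‖(-(4/5) : ℝ)‖^2 = 1 by
      simp [Real.norm_eq_abs, sq_abs]; norm_num]
    exact Real.sqrt_one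
  set C : Set E2 := H v0 ∩ (H v1 ∩ H v2) with hC
  -- C is compact
  have hv0in : ∀ x : E2, ⟪v0, x⟫ = x 0 := by
    intro x; rw [inner_coords]; simp [hv0, EuclideanSpace.single_apply]
  have hv1in : ∀ x : E2, ⟪v1, x⟫ = x 1 := by
    intro x; rw [inner_coords]; simp [hv1, EuclideanSpace.single_apply]
  have hv2in : ∀ x : E2, ⟪v2, x⟫ = -(3/5) * x 0 + -(4/5) * x 1 := by
    intro x; rw [inner_coords, hv20, hv21]
  have hCbdd : Bornology.IsBounded C := by
    set M : ℝ := 5*(|sf K v0 - ρ| + |sf K v1 - ρ| + |sf K v2 - ρ|) + 1 with hM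
    apply (Metric.isBounded_closedBall (x := (0:E2)) (r := M + M)).subset
    intro x hx
    obtain ⟨hx0, hx1, hx2⟩ := hx
    rw [hHdef] at hx0 hx1 hx2
    simp only [Set.mem_setOf_eq] at hx0 hx1 hx2
    rw [hv0in] at hx0
    rw [hv1in] at hx1
    rw [hv2in] at hx2
    have ha0 := le_abs_self (sf K v0 - ρ)
    have ha1 := le_abs_self (sf K v1 - ρ)
    have ha2 := le_abs_self (sf K v2 - ρ)
    have hb0 := neg_abs_le (sf K v0 - ρ)
    have hb1 := neg_abs_le (sf K v1 - ρ)
    have hb2 := neg_abs_le (sf K v2 - ρ)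
    have hxb0 : |x 0| ≤ M := by
      rw [abs_le]
      constructor
      · linarith
      · linarith
    have hxb1 : |x 1| ≤ M := by
      rw [abs_le]
      constructor
      · linarith
      · linarith
    rw [Metric.mem_closedBall, dist_zero_right]
    calc ‖x‖ ≤ |x 0| + |x 1| := norm_le_coords x
      _ ≤ M + M := add_le_add hxb0 hxb1
  have hCcl : IsClosed C :=
    ((H_closed K ρ v0).inter ((H_closed K ρ v1).inter (H_closed K ρ v2)))
  have hCcp : IsCompact C := Metric.isCompact_of_isClosed_isBounded hCcl hCbdd
  -- the family for Helly
  set F : {u : E2 // ‖u‖ = 1} → Set E2 := fun u => H u.val ∩ C with hF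
  have hFcv : ∀ u : {u : E2 // ‖u‖ = 1}, Convex ℝ (F u) := fun u =>
    (H_convex K ρ u.val).inter ((H_convex K ρ v0).inter
      ((H_convex K ρ v1).inter (H_convex K ρ v2)))
  have hFcp : ∀ u : {u : E2 // ‖u‖ = 1}, IsCompact (F u) := fun u =>
    hCcp.inter_left (H_closed K ρ u.val)
  have hinter : ∀ I : Finset {u : E2 // ‖u‖ = 1},
      I.card ≤ Module.finrank ℝ E2 + 1 → (⋂ i ∈ I, F i).Nonempty := by
    intro I _
    set T : Finset E2 := I.image Subtype.val ∪ {v0, v1, v2} with hT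
    have hTunit : ∀ u ∈ T, ‖u‖ = 1 := by
      intro u hu
      rw [hT, Finset.mem_union] at hu
      rcases hu with hu | hu
      · obtain ⟨i, _, rfl⟩ := Finset.mem_image.mp hu
        exact i.2
      · simp only [Finset.mem_insert, Finset.mem_singleton] at hu
        rcases hu with rfl | rfl | rfl
        exacts [hn0, hn1, hn2]
    have hHT : (⋂ u ∈ T, H u).Nonempty := by
      apply Convex.helly_theorem' (𝕜 := ℝ) (fun u _ => H_convex K ρ u)
      intro J hJT hJcard
      rw [finrank_euclideanSpace_fin] at hJcard
      have hJunit : ∀ u ∈ J, ‖u‖ = 1 := fun u hu => hTunit u (hJT hu)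
      have hcases : J.card = 0 ∨ J.card = 1 ∨ J.card = 2 ∨ J.card = 3 := by omega
      rcases hcases with hcard | hcard | hcard | hcard
      · rw [Finset.card_eq_zero] at hcard
        subst hcard
        simp only [Finset.notMem_empty, Set.iInter_of_empty, Set.iInter_univ]
        exact Set.univ_nonempty
      · obtain ⟨a, rfl⟩ := Finset.card_eq_one.mp hcard
        obtain ⟨x, hxa, _, _⟩ := L1 hcp hcv hne (hJunit a (by simp))
          (hJunit a (by simp)) (hJunit a (by simp))
        refine ⟨x, Set.mem_iInter₂.mpr ?_⟩
        intro u hu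
        rw [Finset.mem_singleton] at hu
        subst hu
        exact hxa
      · obtain ⟨a, b, hab, rfl⟩ := Finset.card_eq_two.mp hcard
        obtain ⟨x, hxa, hxb, _⟩ := L1 hcp hcv hne (hJunit a (by simp))
          (hJunit b (by simp)) (hJunit b (by simp))
        refine ⟨x, Set.mem_iInter₂.mpr ?_⟩
        intro u hu
        simp only [Finset.mem_insert, Finset.mem_singleton] at hu
        rcases hu with rfl | rfl
        exacts [hxa, hxb]
      · obtain ⟨a, b, c, hab, hac, hbc, rfl⟩ := Finset.card_eq_three.mp hcard
        obtain ⟨x, hxa, hxb, hxc⟩ := L1 hcp hcv hne (hJunit a (by simp))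
          (hJunit b (by simp)) (hJunit c (by simp))
        refine ⟨x, Set.mem_iInter₂.mpr ?_⟩
        intro u hu
        simp only [Finset.mem_insert, Finset.mem_singleton] at hu
        rcases hu with rfl | rfl | rfl
        exacts [hxa, hxb, hxc]
    obtain ⟨y, hy⟩ := hHT
    have hy' : ∀ u ∈ T, y ∈ H u := Set.mem_iInter₂.mp hy
    have hyC : y ∈ C := by
      refine ⟨hy' v0 ?_, hy' v1 ?_, hy' v2 ?_⟩ <;>
        · rw [hT, Finset.mem_union]
          right
          simp
    refine ⟨y, Set.mem_iInter₂.mpr fun i hi => ⟨?_, hyC⟩⟩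
    refine hy' i.val ?_
    rw [hT, Finset.mem_union]
    exact Or.inl (Finset.mem_image_of_mem _ hi)
  obtain ⟨c, hc⟩ := Convex.helly_theorem_compact' (𝕜 := ℝ) hFcv hFcp hinter
  have hcH : ∀ u : E2, ‖u‖ = 1 → ⟪u, c⟫ ≤ sf K u - ρ := by
    intro u hu
    have := Set.mem_iInter.mp hc ⟨u, hu⟩
    exact this.1
  refine ⟨c, ?_⟩
  intro y hy
  by_contra hyK
  obtain ⟨f, m, hfy, hfb⟩ :=
    geometric_hahn_banach_point_closed hcv hcp.isClosed hyK
  set g : StrongDual ℝ E2 := -f with hg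
  have hgy : -m < g y := by simp [hg]; linarith
  have hgb : ∀ b ∈ K, g b < -m := by
    intro b hb
    have := hfb b hb
    simp [hg]; linarith
  set v : E2 := (InnerProductSpace.toDual ℝ E2).symm g with hv
  have hvinner : ∀ z : E2, ⟪v, z⟫ = g z := fun z =>
    InnerProductSpace.toDual_symm_apply
  have hvne : v ≠ 0 := by
    intro h0
    obtain ⟨p, hp⟩ := hne
    have h1 : g p < -m := hgb p hp
    have h2 : (0:ℝ) = g p := by rw [← hvinner p, h0, inner_zero_left]
    have h3 : (0:ℝ) = g y := by rw [← hvinner y, h0, inner_zero_left]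
    linarith
  set u0 : E2 := ‖v‖⁻¹ • v with hu0
  have hu0n : ‖u0‖ = 1 := norm_smul_inv_norm hvne
  have hvpos : (0:ℝ) < ‖v‖ := norm_pos_iff.mpr hvne
  have hsfle : sf K u0 ≤ ‖v‖⁻¹ * (-m) := by
    refine sf_le hne fun x hx => ?_
    rw [hu0, real_inner_smul_left, hvinner]
    have := hgb x hx
    have hinv : (0:ℝ) < ‖v‖⁻¹ := by positivity
    nlinarith
  have hy0 : ⟪u0, y⟫ = ‖v‖⁻¹ * g y := by
    rw [hu0, real_inner_smul_left, hvinner]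
  have hyc : ⟪u0, y⟫ ≤ ⟪u0, c⟫ + ρ := by
    have h1 : ⟪u0, y - c⟫ ≤ ‖u0‖ * ‖y - c‖ := real_inner_le_norm u0 (y - c)
    have h2 : ‖y - c‖ ≤ ρ := by
      rw [← dist_eq_norm]
      exact Metric.mem_closedBall.mp hy
    have h3 : ⟪u0, y - c⟫ = ⟪u0, y⟫ - ⟪u0, c⟫ := inner_sub_right u0 y c
    rw [hu0n] at h1
    linarith
  have hcc := hcH u0 hu0n
  have hfinal : ‖v‖⁻¹ * g y ≤ ‖v‖⁻¹ * (-m) := by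
    calc ‖v‖⁻¹ * g y = ⟪u0, y⟫ := hy0.symm
      _ ≤ ⟪u0, c⟫ + ρ := hyc
      _ ≤ sf K u0 := by linarith
      _ ≤ ‖v‖⁻¹ * (-m) := hsfle
  have hinv : (0:ℝ) < ‖v‖⁻¹ := by positivity
  nlinarith [hgy]

end Stmt9Aux

theorem stmt_9 (K : Set (EuclideanSpace ℝ (Fin 2)))
    (hcp : IsCompact K) (hcv : Convex ℝ K) (hint : (interior K).Nonempty) :
    sSup {ρ : ℝ | ∃ c, Metric.closedBall c ρ ⊆ K}
      ≥ (sInf {d : ℝ | ∃ u : EuclideanSpace ℝ (Fin 2), ‖u‖ = 1 ∧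
          d = sSup ((fun x => @inner ℝ _ _ u x) '' K)
              - sInf ((fun x => @inner ℝ _ _ u x) '' K)}) / 3 := by
  have hne : K.Nonempty := hint.mono interior_subset
  obtain ⟨c, hc⟩ := main hcp hcv hne
  have hbdd : BddAbove {ρ : ℝ | ∃ c, Metric.closedBall c ρ ⊆ K} := by
    obtain ⟨R, hR⟩ := hcp.isBounded.subset_closedBall 0
    refine ⟨max 0 (2*R), ?_⟩
    rintro r ⟨c', hc'⟩
    rcases le_or_gt r 0 with hr | hr
    · exact le_trans hr (le_max_left _ _)
    · have hcK : c' ∈ K := hc' (Metric.mem_closedBall_self hr.le)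
      set z : EuclideanSpace ℝ (Fin 2) := c' + r • EuclideanSpace.single 0 1 with hz
      have hzc : z - c' = r • (EuclideanSpace.single 0 1 : EuclideanSpace ℝ (Fin 2)) := by
        rw [hz]; abel
      have hr' : ‖z - c'‖ = r := by
        rw [hzc, norm_smul, EuclideanSpace.norm_single]
        simp [Real.norm_eq_abs, abs_of_pos hr]
      have hzK : z ∈ K := by
        apply hc'
        rw [Metric.mem_closedBall, dist_eq_norm, hr']
      have h1 : ‖z‖ ≤ R := by
        have := hR hzK
        rwa [Metric.mem_closedBall, dist_zero_right] at this
      have h2 : ‖c'‖ ≤ R := by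
        have := hR hcK
        rwa [Metric.mem_closedBall, dist_zero_right] at this
      have h3 : ‖z - c'‖ ≤ ‖z‖ + ‖c'‖ := norm_sub_le z c'
      have : r ≤ 2*R := by rw [← hr']; linarith
      exact le_trans this (le_max_right _ _)
  exact le_csSup hbdd ⟨c, hc⟩
end

section
/- Let A > 0, B > 0, C ∈ ℝ, and suppose g : ℕ → ℝ satisfies g(n) = A + B/n² + C/n⁴ + o(1/n⁴) as n → ∞. Then there exists N such that for all n ≥ N, g(n−1)·g(n+1) − g(n)² > 0; equivalently, log g(n) is eventually convex in n. -/
open Filter Topology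

set_option maxHeartbeats 2000000 in
theorem stmt_11 (A B C : ℝ) (hA : 0 < A) (hB : 0 < B) (g h : ℕ → ℝ)
    (hg : ∀ n : ℕ, 1 ≤ n → g n = A + B / (n : ℝ) ^ 2 + C / (n : ℝ) ^ 4 + h n)
    (ho : Filter.Tendsto (fun n : ℕ => (n : ℝ) ^ 4 * h n) Filter.atTop (nhds 0)) :
    ∃ N : ℕ, ∀ n : ℕ, N ≤ n → 0 < g (n - 1) * g (n + 1) - (g n) ^ 2 := by
  set e : ℕ → ℝ := fun k => C / (k : ℝ) ^ 4 + h k with he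
  have hge : ∀ k : ℕ, 1 ≤ k → g k = A + B / (k : ℝ) ^ 2 + e k := by
    intro k hk
    rw [hg k hk, he]
    ring
  -- basic limit
  have hu : Tendsto (fun k : ℕ => (k : ℝ) ^ 4 * e k) atTop (nhds C) := by
    have hEq : ∀ᶠ k : ℕ in atTop, C + (k : ℝ) ^ 4 * h k = (k : ℝ) ^ 4 * e k := by
      filter_upwards [eventually_ge_atTop 1] with k hk
      have hk0 : (k : ℝ) ≠ 0 := by
        have : (1 : ℝ) ≤ (k : ℝ) := by exact_mod_cast hk
        linarith
      rw [he]
      field_simp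
    have h2 : Tendsto (fun k : ℕ => C + (k : ℝ) ^ 4 * h k) atTop (nhds (C + 0)) :=
      tendsto_const_nhds.add ho
    rw [add_zero] at h2
    exact h2.congr' hEq
  -- inverse limits
  have hinv : ∀ c : ℝ, Tendsto (fun m : ℕ => ((m : ℝ) + c)⁻¹) atTop (nhds 0) := by
    intro c
    have h1 : Tendsto (fun m : ℕ => ((m : ℝ) + c)) atTop atTop :=
      tendsto_natCast_atTop_atTop.atTop_add tendsto_const_nhds
    exact h1.inv_tendsto_atTop
  -- shifted limits
  have hub : ∀ b : ℕ, 1 ≤ b → Tendsto (fun m : ℕ => ((m : ℝ) + 2) ^ 4 * e (m + b))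
      atTop (nhds C) := by
    intro b hb
    have hbne : ∀ m : ℕ, ((m : ℝ) + b) ≠ 0 := by
      intro m
      have h1 : (1 : ℝ) ≤ (b : ℝ) := by exact_mod_cast hb
      have h2 : (0 : ℝ) ≤ (m : ℝ) := Nat.cast_nonneg m
      linarith
    have hcomp : Tendsto (fun m : ℕ => ((m : ℝ) + b) ^ 4 * e (m + b)) atTop (nhds C) := by
      have := hu.comp (tendsto_add_atTop_nat b)
      refine this.congr fun m => ?_
      simp only [Function.comp]
      push_cast
      ring
    have hr : Tendsto (fun m : ℕ => (((m : ℝ) + 2) / ((m : ℝ) + b)) ^ 4) atTop (nhds 1) := by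
      have h3 : Tendsto (fun m : ℕ => 1 + (2 - (b : ℝ)) * ((m : ℝ) + b)⁻¹) atTop
          (nhds (1 + (2 - (b : ℝ)) * 0)) :=
        tendsto_const_nhds.add (((hinv (b : ℝ))).const_mul _)
      rw [mul_zero, add_zero] at h3
      have h4 : Tendsto (fun m : ℕ => ((m : ℝ) + 2) / ((m : ℝ) + b)) atTop (nhds 1) := by
        refine h3.congr fun m => ?_
        field_simp [hbne m]
        ring
      have := h4.pow 4
      simpa using this
    have hmul := hr.mul hcomp
    rw [one_mul] at hmul
    refine hmul.congr fun m => ?_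
    field_simp [hbne m]
  -- e shifted tends to 0
  have heb : ∀ b : ℕ, 1 ≤ b → Tendsto (fun m : ℕ => e (m + b)) atTop (nhds 0) := by
    intro b hb
    have h2 : Tendsto (fun m : ℕ => (((m : ℝ) + 2)⁻¹) ^ 4) atTop (nhds 0) := by
      have := (hinv 2).pow 4
      simpa using this
    have := (hub b hb).mul h2
    rw [mul_zero] at this
    refine this.congr fun m => ?_
    have hne : ((m : ℝ) + 2) ≠ 0 := by positivity
    field_simp
  -- rational part limit
  have hrat : Tendsto (fun m : ℕ =>
      A * B * ((m : ℝ) + 2) ^ 4 * (1 / ((m : ℝ) + 1) ^ 2 + 1 / ((m : ℝ) + 3) ^ 2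
        - 2 / ((m : ℝ) + 2) ^ 2)
      + B ^ 2 * ((m : ℝ) + 2) ^ 4 * (1 / (((m : ℝ) + 1) ^ 2 * ((m : ℝ) + 3) ^ 2)
        - 1 / ((m : ℝ) + 2) ^ 4)) atTop (nhds (6 * A * B)) := by
    have ht := hinv 2
    have hnum : Tendsto (fun m : ℕ =>
        A * B * (6 - 2 * (((m : ℝ) + 2)⁻¹) ^ 2)
        + B ^ 2 * (2 * (((m : ℝ) + 2)⁻¹) ^ 2 - (((m : ℝ) + 2)⁻¹) ^ 4)) atTop
        (nhds (A * B * (6 - 2 * 0 ^ 2) + B ^ 2 * (2 * 0 ^ 2 - 0 ^ 4))) := by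
      exact ((tendsto_const_nhds.sub ((ht.pow 2).const_mul 2)).const_mul (A * B)).add
        ((((ht.pow 2).const_mul 2).sub (ht.pow 4)).const_mul (B ^ 2))
    have hden : Tendsto (fun m : ℕ =>
        1 - 2 * (((m : ℝ) + 2)⁻¹) ^ 2 + (((m : ℝ) + 2)⁻¹) ^ 4) atTop
        (nhds (1 - 2 * 0 ^ 2 + 0 ^ 4)) :=
      (tendsto_const_nhds.sub ((ht.pow 2).const_mul 2)).add (ht.pow 4)
    have hdiv := hnum.mul (hden.inv₀ (by norm_num))
    have hval : (A * B * (6 - 2 * (0:ℝ) ^ 2) + B ^ 2 * (2 * 0 ^ 2 - 0 ^ 4))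
        * (1 - 2 * (0:ℝ) ^ 2 + 0 ^ 4)⁻¹ = 6 * A * B := by norm_num; ring
    rw [hval] at hdiv
    refine hdiv.congr fun m => ?_
    rw [← div_eq_mul_inv]
    have h1 : ((m : ℝ) + 1) ≠ 0 := by positivity
    have h2 : ((m : ℝ) + 2) ≠ 0 := by positivity
    have h3 : ((m : ℝ) + 3) ≠ 0 := by positivity
    have hdne : (1 : ℝ) - 2 * (((m : ℝ) + 2)⁻¹) ^ 2 + (((m : ℝ) + 2)⁻¹) ^ 4 ≠ 0 := by
      have heq : (1 : ℝ) - 2 * (((m : ℝ) + 2)⁻¹) ^ 2 + (((m : ℝ) + 2)⁻¹) ^ 4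
          = ((m : ℝ) + 1) ^ 2 * ((m : ℝ) + 3) ^ 2 / ((m : ℝ) + 2) ^ 4 := by
        field_simp
        ring
      rw [heq]
      positivity
    rw [div_eq_iff hdne]
    field_simp
    ring
  -- main limit
  have hF : Tendsto (fun m : ℕ =>
      ((m : ℝ) + 2) ^ 4 * (g (m + 1) * g (m + 3) - (g (m + 2)) ^ 2)) atTop
      (nhds (6 * A * B)) := by
    have hu1 := hub 1 (by norm_num)
    have hu2 := hub 2 (by norm_num)
    have hu3 := hub 3 (by norm_num)
    have he2 := heb 2 (by norm_num)
    have he3 := heb 3 (by norm_num)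
    have hΦ : Tendsto (fun m : ℕ =>
        (A * B * ((m : ℝ) + 2) ^ 4 * (1 / ((m : ℝ) + 1) ^ 2 + 1 / ((m : ℝ) + 3) ^ 2
          - 2 / ((m : ℝ) + 2) ^ 2)
        + B ^ 2 * ((m : ℝ) + 2) ^ 4 * (1 / (((m : ℝ) + 1) ^ 2 * ((m : ℝ) + 3) ^ 2)
          - 1 / ((m : ℝ) + 2) ^ 4))
        + A * (((m : ℝ) + 2) ^ 4 * e (m + 1) + ((m : ℝ) + 2) ^ 4 * e (m + 3)
          - 2 * (((m : ℝ) + 2) ^ 4 * e (m + 2)))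
        + B * ((((m : ℝ) + 2) ^ 4 * e (m + 3)) * (((m : ℝ) + 1)⁻¹) ^ 2
          + (((m : ℝ) + 2) ^ 4 * e (m + 1)) * (((m : ℝ) + 3)⁻¹) ^ 2
          - 2 * ((((m : ℝ) + 2) ^ 4 * e (m + 2)) * (((m : ℝ) + 2)⁻¹) ^ 2))
        + ((((m : ℝ) + 2) ^ 4 * e (m + 1)) * e (m + 3)
          - (((m : ℝ) + 2) ^ 4 * e (m + 2)) * e (m + 2))) atTop
        (nhds (6 * A * B + A * (C + C - 2 * C)
          + B * (C * 0 ^ 2 + C * 0 ^ 2 - 2 * (C * 0 ^ 2)) + (C * 0 - C * 0))) := by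
      have hi1 := (hinv 1).pow 2
      have hi2 := (hinv 2).pow 2
      have hi3 := (hinv 3).pow 2
      exact ((hrat.add (((hu1.add hu3).sub (hu2.const_mul 2)).const_mul A)).add
        (((((hu3.mul hi1).add (hu1.mul hi3)).sub ((hu2.mul hi2).const_mul 2)).const_mul B))).add
        ((hu1.mul he3).sub (hu2.mul he2))
    rw [show (6 * A * B + A * (C + C - 2 * C)
      + B * (C * 0 ^ 2 + C * 0 ^ 2 - 2 * (C * 0 ^ 2)) + (C * 0 - C * 0)) = 6 * A * B
      from by ring] at hΦ
    refine hΦ.congr fun m => ?_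
    have h1 : ((m : ℝ) + 1) ≠ 0 := by positivity
    have h2 : ((m : ℝ) + 2) ≠ 0 := by positivity
    have h3 : ((m : ℝ) + 3) ≠ 0 := by positivity
    have e1 := hge (m + 1) (by omega)
    have e2 := hge (m + 2) (by omega)
    have e3 := hge (m + 3) (by omega)
    push_cast at e1 e2 e3
    rw [e1, e2, e3]
    field_simp
    ring
  have hpos : ∀ᶠ m : ℕ in atTop, 0 < ((m : ℝ) + 2) ^ 4 * (g (m + 1) * g (m + 3) - (g (m + 2)) ^ 2) :=
    hF.eventually (eventually_gt_nhds (by positivity))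
  obtain ⟨M, hM⟩ := eventually_atTop.mp hpos
  refine ⟨M + 2, fun n hn => ?_⟩
  obtain ⟨m, rfl⟩ : ∃ m, n = m + 2 := ⟨n - 2, by omega⟩
  have hm := hM m (by omega)
  have hp : (0 : ℝ) < ((m : ℝ) + 2) ^ 4 := by positivity
  have hidx : m + 2 - 1 = m + 1 := by omega
  rw [hidx]
  have : m + 2 + 1 = m + 3 := by omega
  rw [this]
  nlinarith [hm, hp]
end

section
/- Let g : {3, 4, 5, ...} → ℝ be positive, monotone decreasing, and satisfy the weak Dowker property at 6: ((n−6)/(n−m))·g(m) + ((6−m)/(n−m))·g(n) ≥ g(6) for all 3 ≤ m < 6 < n. If v₁, ..., v_k are reals with each vᵢ ≥ 3 (take values at integers via any extension g(v) := g(⌈v⌉) or assume vᵢ are integers), and τ₁, ..., τ_k ∈ [0,1] with Σᵢ τᵢ = 1 and Σᵢ τᵢ·vᵢ ≤ 6, then Σᵢ τᵢ·g(vᵢ) ≥ g(6). -/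
theorem stmt_13 (g : ℕ → ℝ)
    (hpos : ∀ n : ℕ, 3 ≤ n → 0 < g n)
    (hmono : ∀ m n : ℕ, 3 ≤ m → m ≤ n → g n ≤ g m)
    (hdowker : ∀ m n : ℕ, 3 ≤ m → m < 6 → 6 < n →
      (((n : ℝ) - 6) / ((n : ℝ) - m)) * g m + (((6 : ℝ) - m) / ((n : ℝ) - m)) * g n ≥ g 6)
    (k : ℕ) (v : Fin k → ℕ) (hv : ∀ i, 3 ≤ v i)
    (τ : Fin k → ℝ) (hτ0 : ∀ i, 0 ≤ τ i) (hτ1 : ∀ i, τ i ≤ 1)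
    (hsum : ∑ i, τ i = 1) (hbar : ∑ i, τ i * (v i : ℝ) ≤ 6) :
    ∑ i, τ i * g (v i) ≥ g 6 := by
  set s3 : ℝ := (g 3 - g 6) / 3 with hs3
  set s4 : ℝ := (g 4 - g 6) / 2 with hs4
  set s5 : ℝ := (g 5 - g 6) / 1 with hs5
  set c : ℝ := min s3 (min s4 s5) with hc
  have hg3 : g 6 ≤ g 3 := hmono 3 6 (by norm_num) (by norm_num)
  have hg4 : g 6 ≤ g 4 := hmono 4 6 (by norm_num) (by norm_num)
  have hg5 : g 6 ≤ g 5 := hmono 5 6 (by norm_num) (by norm_num)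
  have hc0 : 0 ≤ c := le_min (div_nonneg (by linarith) (by norm_num))
    (le_min (div_nonneg (by linarith) (by norm_num)) (div_nonneg (by linarith) (by norm_num)))
  have hc3 : c * 3 ≤ g 3 - g 6 := by
    have h := min_le_left s3 (min s4 s5)
    rw [hs3, le_div_iff₀ (by norm_num : (0:ℝ) < 3)] at h
    linarith
  have hc4 : c * 2 ≤ g 4 - g 6 := by
    have h := (min_le_right s3 (min s4 s5)).trans (min_le_left s4 s5)
    rw [hs4, le_div_iff₀ (by norm_num : (0:ℝ) < 2)] at h
    linarith
  have hc5 : c * 1 ≤ g 5 - g 6 := by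
    have h := (min_le_right s3 (min s4 s5)).trans (min_le_right s4 s5)
    rw [hs5, le_div_iff₀ (by norm_num : (0:ℝ) < 1)] at h
    linarith
  -- main lemma for n > 6
  have main : ∀ m : ℕ, 3 ≤ m → m < 6 → c * ((6:ℝ) - m) = g m - g 6 →
      ∀ n : ℕ, 7 ≤ n → g 6 + c * (6 - (n:ℝ)) ≤ g n := by
    intro m hm3 hm6 hcm n hn
    have hmr : (m:ℝ) < 6 := by exact_mod_cast hm6
    have hnr : (6:ℝ) < n := by exact_mod_cast (by omega : 6 < n)
    have hnm : (0:ℝ) < (n:ℝ) - m := by linarith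
    have hd := hdowker m n hm3 hm6 (by omega)
    have heq : (((n:ℝ) - 6) / ((n:ℝ) - m)) * g m + (((6:ℝ) - m) / ((n:ℝ) - m)) * g n
        = (((n:ℝ) - 6) * g m + ((6:ℝ) - m) * g n) / ((n:ℝ) - m) := by ring
    rw [ge_iff_le, heq, le_div_iff₀ hnm] at hd
    have h3 : ((n:ℝ) - 6) * (g m - g 6) = c * ((6:ℝ) - m) * ((n:ℝ) - 6) := by
      rw [hcm]; ring
    have h4 : ((6:ℝ) - m) * (g 6 - g n) ≤ ((6:ℝ) - m) * (c * ((n:ℝ) - 6)) := by nlinarith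
    have h5 := (mul_le_mul_iff_right₀ (by linarith : (0:ℝ) < 6 - m)).mp h4
    nlinarith
  have key : ∀ n : ℕ, 3 ≤ n → g 6 + c * (6 - (n:ℝ)) ≤ g n := by
    intro n hn
    rcases lt_or_ge n 7 with h | h
    · interval_cases n
      · push_cast; linarith
      · push_cast; linarith
      · push_cast; linarith
      · push_cast; linarith
    · -- n ≥ 7: pick the minimizing slope
      rcases le_or_gt s3 (min s4 s5) with h1 | h1
      · have hcm : c = s3 := min_eq_left h1
        refine main 3 (by norm_num) (by norm_num) ?_ n h
        rw [hcm, hs3]; push_cast; ring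
      · rcases le_or_gt s4 s5 with h2 | h2
        · have hcm : c = s4 := by
            rw [hc, min_eq_right h1.le, min_eq_left h2]
          refine main 4 (by norm_num) (by norm_num) ?_ n h
          rw [hcm, hs4]; push_cast; ring
        · have hcm : c = s5 := by
            rw [hc, min_eq_right h1.le, min_eq_right h2.le]
          refine main 5 (by norm_num) (by norm_num) ?_ n h
          rw [hcm, hs5]; push_cast; ring
  have h1 : ∑ i, τ i * (g 6 + c * (6 - (v i : ℝ))) ≤ ∑ i, τ i * g (v i) :=
    Finset.sum_le_sum fun i _ => mul_le_mul_of_nonneg_left (key (v i) (hv i)) (hτ0 i)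
  have h2 : ∑ i, τ i * (g 6 + c * (6 - (v i : ℝ)))
      = g 6 * (∑ i, τ i) + c * (6 * (∑ i, τ i) - ∑ i, τ i * (v i : ℝ)) := by
    rw [Finset.mul_sum, Finset.mul_sum, ← Finset.sum_sub_distrib, Finset.mul_sum,
      ← Finset.sum_add_distrib]
    exact Finset.sum_congr rfl fun i _ => by ring
  rw [h2, hsum] at h1
  have h3 : 0 ≤ c * (6 * 1 - ∑ i, τ i * (v i : ℝ)) := mul_nonneg hc0 (by linarith)
  linarith
end

section
/- Define A(k, 6) = (6 − r)·tan(πq/(2k)) + r·tan(π(q+1)/(2k)) where 2k = 6q + r, q ≥ 1, 0 ≤ r < 6. Then for each fixed r ∈ {0, 1, 2, 3, 4, 5}, A(k, 6) is decreasing in q, and for all q ≥ 3, √(A(k,6)) ≤ (1/2)·(√(5·tan(π/5)) + √(7·tan(π/7))). -/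
open Real Set

/-- If `f 0 = 0` and `f` has nonneg derivative on `[0,∞)`, then `f ≥ 0` there. -/
lemma nonneg_of_deriv_aux (f f' : ℝ → ℝ) (hf : ∀ x, HasDerivAt f (f' x) x)
    (h0 : f 0 = 0) (hd : ∀ x, 0 ≤ x → 0 ≤ f' x) : ∀ x, 0 ≤ x → 0 ≤ f x := by
  intro x hx
  have hdiff : ∀ y ∈ Ici (0:ℝ), DifferentiableAt ℝ f y := fun y _ => (hf y).differentiableAt
  have hmono : MonotoneOn f (Ici (0:ℝ)) := by
    apply monotoneOn_of_deriv_nonneg (convex_Ici 0)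
      (fun y hy => (hdiff y hy).continuousAt.continuousWithinAt)
      (fun y hy => ((hf y).differentiableAt).differentiableWithinAt)
    intro y hy
    rw [interior_Ici] at hy
    rw [(hf y).deriv]
    exact hd y (le_of_lt hy)
  have := hmono (self_mem_Ici) (mem_Ici.2 hx) hx
  linarith [this]

lemma sin_ge_cubic : ∀ x : ℝ, 0 ≤ x → x - x^3/6 ≤ Real.sin x := by
  have := nonneg_of_deriv_aux (fun x => Real.sin x - (x - x^3/6))
    (fun x => Real.cos x - (1 - x^2/2)) (fun x => by
      have h1 : HasDerivAt (fun x : ℝ => x - x^3/6) (1 - x^2/2) x := by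
        have := ((hasDerivAt_id x).sub (((hasDerivAt_pow 3 x)).div_const 6))
        exact this.congr_deriv (by ring)
      exact (Real.hasDerivAt_sin x).sub h1)
    (by norm_num)
    (fun x hx => by nlinarith [Real.one_sub_sq_div_two_le_cos (x := x)])
  intro x hx; linarith [this x hx]

lemma cos_le_quartic : ∀ x : ℝ, 0 ≤ x → Real.cos x ≤ 1 - x^2/2 + x^4/24 := by
  have := nonneg_of_deriv_aux (fun x => (1 - x^2/2 + x^4/24) - Real.cos x)
    (fun x => (- x + x^3/6) + Real.sin x) (fun x => by
      have h1 : HasDerivAt (fun x : ℝ => 1 - x^2/2 + x^4/24) (- x + x^3/6) x := by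
        have := (((hasDerivAt_const x (1:ℝ)).sub ((hasDerivAt_pow 2 x).div_const 2)).add
          ((hasDerivAt_pow 4 x).div_const 24))
        exact this.congr_deriv (by ring)
      have := h1.sub (Real.hasDerivAt_cos x)
      exact this.congr_deriv (by ring))
    (by norm_num)
    (fun x hx => by nlinarith [sin_ge_cubic x hx])
  intro x hx; linarith [this x hx]

lemma sin_le_quintic : ∀ x : ℝ, 0 ≤ x → Real.sin x ≤ x - x^3/6 + x^5/120 := by
  have := nonneg_of_deriv_aux (fun x => (x - x^3/6 + x^5/120) - Real.sin x)
    (fun x => (1 - x^2/2 + x^4/24) - Real.cos x) (fun x => by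
      have h1 : HasDerivAt (fun x : ℝ => x - x^3/6 + x^5/120) (1 - x^2/2 + x^4/24) x := by
        have := (((hasDerivAt_id x).sub ((hasDerivAt_pow 3 x).div_const 6)).add
          ((hasDerivAt_pow 5 x).div_const 120))
        exact this.congr_deriv (by ring)
      exact h1.sub (Real.hasDerivAt_sin x))
    (by norm_num)
    (fun x hx => by nlinarith [cos_le_quartic x hx])
  intro x hx; linarith [this x hx]

lemma cos_ge_sextic : ∀ x : ℝ, 0 ≤ x → 1 - x^2/2 + x^4/24 - x^6/720 ≤ Real.cos x := by
  have := nonneg_of_deriv_aux (fun x => Real.cos x - (1 - x^2/2 + x^4/24 - x^6/720))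
    (fun x => - Real.sin x + (x - x^3/6 + x^5/120)) (fun x => by
      have h1 : HasDerivAt (fun x : ℝ => 1 - x^2/2 + x^4/24 - x^6/720)
          (- x + x^3/6 - x^5/120) x := by
        have := ((((hasDerivAt_const x (1:ℝ)).sub ((hasDerivAt_pow 2 x).div_const 2)).add
          ((hasDerivAt_pow 4 x).div_const 24)).sub ((hasDerivAt_pow 6 x).div_const 720))
        exact this.congr_deriv (by ring)
      have := (Real.hasDerivAt_cos x).sub h1
      exact this.congr_deriv (by ring))
    (by norm_num)
    (fun x hx => by nlinarith [sin_le_quintic x hx])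
  intro x hx; linarith [this x hx]

/-- Numeric upper bound for tan from rational enclosure of the angle. -/
lemma tan_num_le (θ l u T : ℝ) (h0 : 0 ≤ l) (hl : l ≤ θ) (hu : θ ≤ u) (hu7 : u ≤ 0.7)
    (hT0 : 0 ≤ T)
    (hT : u - u^3/6 + u^5/120 ≤ T * (1 - u^2/2 + u^4/24 - u^6/720)) :
    Real.tan θ ≤ T := by
  have hθ0 : 0 ≤ θ := le_trans h0 hl
  have hu0 : 0 ≤ u := le_trans hθ0 hu
  have hθ7 : θ ≤ 0.7 := le_trans hu hu7
  have hcos : Real.cos θ ≥ 1 - u^2/2 + u^4/24 - u^6/720 := by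
    have h1 := cos_ge_sextic θ hθ0
    have h2 : 0 ≤ (u^2 - θ^2) := by nlinarith
    have h3 : 0 ≤ (u^2 - θ^2) * (360 - 30*(u^2+θ^2) + (u^4 + u^2*θ^2 + θ^4)) :=
      mul_nonneg h2 (by nlinarith [sq_nonneg (u*θ), sq_nonneg u, sq_nonneg θ])
    nlinarith [h3]
  have h49u : u^2 ≤ 49/100 := by nlinarith
  have hu4 : 0 ≤ u^4 := by positivity
  have h6 : u^6 ≤ 49/100 * u^4 := by nlinarith
  have hcpos : 0 < Real.cos θ := by nlinarith
  have hsin : Real.sin θ ≤ u - u^3/6 + u^5/120 := by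
    have h1 := sin_le_quintic θ hθ0
    have h2 : 0 ≤ u - θ := by linarith
    have h3 : 0 ≤ (u - θ) * (120 - 20*(u^2 + u*θ + θ^2) + (u^4 + u^3*θ + u^2*θ^2 + u*θ^3 + θ^4)) :=
      mul_nonneg h2 (by nlinarith [sq_nonneg (u-θ), mul_nonneg hθ0 hu0, mul_nonneg (mul_nonneg hθ0 hθ0) (mul_nonneg hu0 hu0), mul_nonneg (mul_nonneg hu0 hu0) (mul_nonneg hu0 hθ0), mul_nonneg (mul_nonneg hθ0 hθ0) (mul_nonneg hθ0 hu0)])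
    nlinarith [h3]
  rw [Real.tan_eq_sin_div_cos, div_le_iff₀ hcpos]
  calc Real.sin θ ≤ u - u^3/6 + u^5/120 := hsin
    _ ≤ T * (1 - u^2/2 + u^4/24 - u^6/720) := hT
    _ ≤ T * Real.cos θ := by nlinarith

/-- Numeric lower bound for tan from rational enclosure of the angle. -/
lemma tan_num_ge (θ l u T : ℝ) (h0 : 0 ≤ l) (hl : l ≤ θ) (hu : θ ≤ u) (hu7 : u ≤ 0.7)
    (hT0 : 0 ≤ T)
    (hT : T * (1 - l^2/2 + l^4/24) ≤ l - l^3/6) :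
    T ≤ Real.tan θ := by
  have hθ0 : 0 ≤ θ := le_trans h0 hl
  have hθ7 : θ ≤ 0.7 := le_trans hu hu7
  have hcpos : 0 < Real.cos θ := by
    nlinarith [Real.one_sub_sq_div_two_le_cos (x := θ)]
  have hcos : Real.cos θ ≤ 1 - l^2/2 + l^4/24 := by
    have h1 := cos_le_quartic θ hθ0
    have h2 : 0 ≤ (θ^2 - l^2) := by nlinarith
    have h3 : 0 ≤ (θ^2 - l^2) * (12 - (θ^2 + l^2)) :=
      mul_nonneg h2 (by nlinarith [sq_nonneg l])
    nlinarith [h3]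
  have hsin : l - l^3/6 ≤ Real.sin θ := by
    have h1 := sin_ge_cubic θ hθ0
    have h2 : 0 ≤ θ - l := by linarith
    have h3 : 0 ≤ (θ - l) * (6 - (θ^2 + θ*l + l^2)) :=
      mul_nonneg h2 (by nlinarith [sq_nonneg l, mul_nonneg h0 hθ0])
    nlinarith [h3]
  rw [Real.tan_eq_sin_div_cos, le_div_iff₀ hcpos]
  calc T * Real.cos θ ≤ T * (1 - l^2/2 + l^4/24) := by nlinarith
    _ ≤ l - l^3/6 := hT
    _ ≤ Real.sin θ := hsin

/-- tan is convex on `[0, π/2)`. -/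
lemma convexOn_tan : ConvexOn ℝ (Ico 0 (π/2)) Real.tan := by
  have hcos : ∀ y ∈ Ico (0:ℝ) (π/2), 0 < Real.cos y := fun y hy =>
    Real.cos_pos_of_mem_Ioo ⟨by linarith [hy.1, Real.pi_pos], hy.2⟩
  have hint : interior (Ico (0:ℝ) (π/2)) = Ioo 0 (π/2) := interior_Ico
  apply MonotoneOn.convexOn_of_deriv (convex_Ico 0 (π/2))
  · exact ContinuousOn.mono Real.continuousOn_tan
      (fun z hz => by simpa using (hcos z hz).ne')
  · rw [hint]
    intro y hy
    exact (Real.hasDerivAt_tan (hcos y ⟨hy.1.le, hy.2⟩).ne').differentiableAt.differentiableWithinAt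
  · rw [hint]
    intro y₁ hy₁ y₂ hy₂ h12
    rw [Real.deriv_tan, Real.deriv_tan]
    have hc1 := hcos y₁ ⟨hy₁.1.le, hy₁.2⟩
    have hc2 := hcos y₂ ⟨hy₂.1.le, hy₂.2⟩
    have : Real.cos y₂ ≤ Real.cos y₁ :=
      Real.cos_le_cos_of_nonneg_of_le_pi hy₁.1.le (by linarith [hy₂.2, Real.pi_pos]) h12
    apply div_le_div_of_nonneg_left one_pos.le (by positivity)
    nlinarith

/-- Majorization step: contracting a two-point distribution with fixed mean decreases
the weighted sum of tan. -/
lemma maj_step (w₁ w₂ a b a' b' : ℝ) (hw₁ : 0 ≤ w₁) (hw₂ : 0 ≤ w₂)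
    (ha : a ≤ a') (hab : a' ≤ b') (hb : b' ≤ b)
    (haI : a ∈ Ico (0:ℝ) (π/2)) (hbI : b ∈ Ico (0:ℝ) (π/2))
    (hsum : w₁ * a + w₂ * b = w₁ * a' + w₂ * b') :
    w₁ * Real.tan a' + w₂ * Real.tan b' ≤ w₁ * Real.tan a + w₂ * Real.tan b := by
  rcases eq_or_lt_of_le (le_trans ha (le_trans hab hb)) with heq | hlt
  · have ha' : a = a' := le_antisymm ha (by linarith)
    have hb' : b = b' := le_antisymm (by linarith) hb
    rw [← ha', ← hb']
  · set s := (a' - a) / (b - a) with hs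
    set t := (b' - a) / (b - a) with ht
    have hba : 0 < b - a := by linarith
    have hs0 : 0 ≤ s := div_nonneg (by linarith) hba.le
    have ht0 : 0 ≤ t := div_nonneg (by linarith) hba.le
    have hconv := convexOn_tan.2 haI hbI
    have h1 : Real.tan a' ≤ (1-s) * Real.tan a + s * Real.tan b := by
      have h := hconv (div_nonneg (by linarith) hba.le : (0:ℝ) ≤ (b - a')/(b-a)) hs0
        (by rw [hs, ← add_div, div_eq_one_iff_eq hba.ne']; ring)
      have he : ((b - a')/(b-a)) • a + s • b = a' := by
        rw [smul_eq_mul, smul_eq_mul, hs]; field_simp; ring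
      have he2 : (b - a')/(b-a) = 1 - s := by rw [hs]; field_simp; ring
      rw [he, he2, smul_eq_mul, smul_eq_mul] at h
      exact h
    have h2 : Real.tan b' ≤ (1-t) * Real.tan a + t * Real.tan b := by
      have h := hconv (div_nonneg (by linarith) hba.le : (0:ℝ) ≤ (b - b')/(b-a)) ht0
        (by rw [ht, ← add_div, div_eq_one_iff_eq hba.ne']; ring)
      have he : ((b - b')/(b-a)) • a + t • b = b' := by
        rw [smul_eq_mul, smul_eq_mul, ht]; field_simp; ring
      have he2 : (b - b')/(b-a) = 1 - t := by rw [ht]; field_simp; ring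
      rw [he, he2, smul_eq_mul, smul_eq_mul] at h
      exact h
    have hkey : w₁ * s + w₂ * t = w₂ := by
      rw [hs, ht]
      field_simp
      linarith [hsum]
    calc w₁ * Real.tan a' + w₂ * Real.tan b'
        ≤ w₁ * ((1-s) * Real.tan a + s * Real.tan b)
          + w₂ * ((1-t) * Real.tan a + t * Real.tan b) :=
          add_le_add (mul_le_mul_of_nonneg_left h1 hw₁) (mul_le_mul_of_nonneg_left h2 hw₂)
      _ = w₁ * Real.tan a + w₂ * Real.tan b := by
          linear_combination (Real.tan b - Real.tan a) * hkey

lemma part1 : ∀ r : ℕ, r < 6 → ∀ q q' : ℕ, 1 ≤ q → q ≤ q' →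
      ((6 : ℝ) - r) * Real.tan (Real.pi * q' / (6 * q' + r))
          + (r : ℝ) * Real.tan (Real.pi * (q' + 1) / (6 * q' + r))
        ≤ ((6 : ℝ) - r) * Real.tan (Real.pi * q / (6 * q + r))
          + (r : ℝ) * Real.tan (Real.pi * (q + 1) / (6 * q + r)) := by
  intro r hr q q' hq hqq'
  have hR : (r : ℝ) ≤ 5 := by exact_mod_cast Nat.lt_succ_iff.mp hr
  have hR0 : (0:ℝ) ≤ r := Nat.cast_nonneg r
  have hQ : (1:ℝ) ≤ q := by exact_mod_cast hq
  have hQQ : (q:ℝ) ≤ q' := by exact_mod_cast hqq'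
  have hπ := Real.pi_pos
  set R := (r:ℝ); set Q := (q:ℝ); set Q' := (q':ℝ)
  have hD : (0:ℝ) < 6*Q + R := by linarith
  have hD' : (0:ℝ) < 6*Q' + R := by linarith
  apply maj_step (6 - R) R (π*Q/(6*Q+R)) (π*(Q+1)/(6*Q+R)) (π*Q'/(6*Q'+R)) (π*(Q'+1)/(6*Q'+R))
    (by linarith) hR0
  · rw [div_le_div_iff₀ hD hD']
    nlinarith [mul_nonneg (mul_nonneg hπ.le hR0) (sub_nonneg.2 hQQ)]
  · rw [div_le_div_iff₀ hD' hD']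
    nlinarith [mul_pos hπ hD']
  · rw [div_le_div_iff₀ hD' hD]
    nlinarith [mul_nonneg (mul_nonneg hπ.le (by linarith : (0:ℝ) ≤ 6 - R)) (sub_nonneg.2 hQQ)]
  · constructor
    · positivity
    · rw [div_lt_iff₀ hD]
      nlinarith
  · constructor
    · positivity
    · rw [div_lt_iff₀ hD]
      nlinarith
  · field_simp
    ring

lemma sqrt_step (A X Y c1 c2 : ℝ) (h1 : c1 ≤ Real.sqrt X) (h2 : c2 ≤ Real.sqrt Y)
    (hc : 0 ≤ c1 + c2) (hA : A ≤ ((c1+c2)/2)^2) :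
    Real.sqrt A ≤ (1/2) * (Real.sqrt X + Real.sqrt Y) := by
  calc Real.sqrt A ≤ Real.sqrt (((c1+c2)/2)^2) := Real.sqrt_le_sqrt hA
    _ = (c1+c2)/2 := Real.sqrt_sq (by linarith)
    _ ≤ (1/2) * (Real.sqrt X + Real.sqrt Y) := by linarith

set_option maxHeartbeats 2000000 in
theorem stmt_16 :
    (∀ r : ℕ, r < 6 → ∀ q q' : ℕ, 1 ≤ q → q ≤ q' →
      ((6 : ℝ) - r) * Real.tan (Real.pi * q' / (6 * q' + r))
          + (r : ℝ) * Real.tan (Real.pi * (q' + 1) / (6 * q' + r))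
        ≤ ((6 : ℝ) - r) * Real.tan (Real.pi * q / (6 * q + r))
          + (r : ℝ) * Real.tan (Real.pi * (q + 1) / (6 * q + r))) ∧
    (∀ r : ℕ, r < 6 → ∀ q : ℕ, 3 ≤ q →
      Real.sqrt (((6 : ℝ) - r) * Real.tan (Real.pi * q / (6 * q + r))
          + (r : ℝ) * Real.tan (Real.pi * (q + 1) / (6 * q + r)))
        ≤ (1 / 2) * (Real.sqrt (5 * Real.tan (Real.pi / 5))
          + Real.sqrt (7 * Real.tan (Real.pi / 7)))) := by
  refine ⟨part1, ?_⟩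
  intro r hr q hq
  have t5 : (0.725466:ℝ) ≤ Real.tan (π/5) :=
    tan_num_ge _ (3.141592/5) (3.141593/5) _ (by norm_num)
      (by linarith [Real.pi_gt_d6]) (by linarith [Real.pi_lt_d6])
      (by norm_num) (by norm_num) (by norm_num)
  have t7 : (0.4814:ℝ) ≤ Real.tan (π/7) :=
    tan_num_ge _ (3.141592/7) (3.141593/7) _ (by norm_num)
      (by linarith [Real.pi_gt_d6]) (by linarith [Real.pi_lt_d6])
      (by norm_num) (by norm_num) (by norm_num)
  have hc1 : (1.9045:ℝ) ≤ Real.sqrt (5 * Real.tan (π/5)) :=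
    Real.le_sqrt_of_sq_le (by nlinarith [t5])
  have hc2 : (1.8357:ℝ) ≤ Real.sqrt (7 * Real.tan (π/7)) :=
    Real.le_sqrt_of_sq_le (by nlinarith [t7])
  interval_cases r
  · have h := part1 0 (by norm_num) 3 q (by norm_num) hq
    push_cast at h
    norm_num at h
    have h1 : Real.tan (π * 3 / 18) ≤ 0.577353 :=
      tan_num_le _ (3.141592*3/18) (3.141593*3/18) _ (by norm_num)
        (by linarith [Real.pi_gt_d6]) (by linarith [Real.pi_lt_d6])
        (by norm_num) (by norm_num) (by norm_num)
    have h2 : Real.tan (π * 4 / 18) ≤ 0.839123 :=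
      tan_num_le _ (3.141592*4/18) (3.141593*4/18) _ (by norm_num)
        (by linarith [Real.pi_gt_d6]) (by linarith [Real.pi_lt_d6])
        (by norm_num) (by norm_num) (by norm_num)
    apply sqrt_step _ _ _ 1.9045 1.8357 hc1 hc2 (by norm_num)
    push_cast
    norm_num
    nlinarith [h, h1, h2]
  · have h := part1 1 (by norm_num) 3 q (by norm_num) hq
    push_cast at h
    norm_num at h
    have h1 : Real.tan (π * 3 / 19) ≤ 0.541175 :=
      tan_num_le _ (3.141592*3/19) (3.141593*3/19) _ (by norm_num)
        (by linarith [Real.pi_gt_d6]) (by linarith [Real.pi_lt_d6])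
        (by norm_num) (by norm_num) (by norm_num)
    have h2 : Real.tan (π * 4 / 19) ≤ 0.778347 :=
      tan_num_le _ (3.141592*4/19) (3.141593*4/19) _ (by norm_num)
        (by linarith [Real.pi_gt_d6]) (by linarith [Real.pi_lt_d6])
        (by norm_num) (by norm_num) (by norm_num)
    apply sqrt_step _ _ _ 1.9045 1.8357 hc1 hc2 (by norm_num)
    push_cast
    norm_num
    nlinarith [h, h1, h2]
  · have h := part1 2 (by norm_num) 3 q (by norm_num) hq
    push_cast at h
    norm_num at h
    have h1 : Real.tan (π * 3 / 20) ≤ 0.509527 :=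
      tan_num_le _ (3.141592*3/20) (3.141593*3/20) _ (by norm_num)
        (by linarith [Real.pi_gt_d6]) (by linarith [Real.pi_lt_d6])
        (by norm_num) (by norm_num) (by norm_num)
    have h2 : Real.tan (π * 4 / 20) ≤ 0.726553 :=
      tan_num_le _ (3.141592*4/20) (3.141593*4/20) _ (by norm_num)
        (by linarith [Real.pi_gt_d6]) (by linarith [Real.pi_lt_d6])
        (by norm_num) (by norm_num) (by norm_num)
    apply sqrt_step _ _ _ 1.9045 1.8357 hc1 hc2 (by norm_num)
    push_cast
    norm_num
    nlinarith [h, h1, h2]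
  · have h := part1 3 (by norm_num) 3 q (by norm_num) hq
    push_cast at h
    norm_num at h
    have h1 : Real.tan (π * 3 / 21) ≤ 0.481576 :=
      tan_num_le _ (3.141592*3/21) (3.141593*3/21) _ (by norm_num)
        (by linarith [Real.pi_gt_d6]) (by linarith [Real.pi_lt_d6])
        (by norm_num) (by norm_num) (by norm_num)
    have h2 : Real.tan (π * 4 / 21) ≤ 0.681796 :=
      tan_num_le _ (3.141592*4/21) (3.141593*4/21) _ (by norm_num)
        (by linarith [Real.pi_gt_d6]) (by linarith [Real.pi_lt_d6])
        (by norm_num) (by norm_num) (by norm_num)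
    apply sqrt_step _ _ _ 1.9045 1.8357 hc1 hc2 (by norm_num)
    push_cast
    norm_num
    nlinarith [h, h1, h2]
  · have h := part1 4 (by norm_num) 3 q (by norm_num) hq
    push_cast at h
    norm_num at h
    have h1 : Real.tan (π * 3 / 22) ≤ 0.456686 :=
      tan_num_le _ (3.141592*3/22) (3.141593*3/22) _ (by norm_num)
        (by linarith [Real.pi_gt_d6]) (by linarith [Real.pi_lt_d6])
        (by norm_num) (by norm_num) (by norm_num)
    have h2 : Real.tan (π * 4 / 22) ≤ 0.642666 :=
      tan_num_le _ (3.141592*4/22) (3.141593*4/22) _ (by norm_num)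
        (by linarith [Real.pi_gt_d6]) (by linarith [Real.pi_lt_d6])
        (by norm_num) (by norm_num) (by norm_num)
    apply sqrt_step _ _ _ 1.9045 1.8357 hc1 hc2 (by norm_num)
    push_cast
    norm_num
    nlinarith [h, h1, h2]
  · have h := part1 5 (by norm_num) 3 q (by norm_num) hq
    push_cast at h
    norm_num at h
    have h1 : Real.tan (π * 3 / 23) ≤ 0.434362 :=
      tan_num_le _ (3.141592*3/23) (3.141593*3/23) _ (by norm_num)
        (by linarith [Real.pi_gt_d6]) (by linarith [Real.pi_lt_d6])
        (by norm_num) (by norm_num) (by norm_num)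
    have h2 : Real.tan (π * 4 / 23) ≤ 0.608118 :=
      tan_num_le _ (3.141592*4/23) (3.141593*4/23) _ (by norm_num)
        (by linarith [Real.pi_gt_d6]) (by linarith [Real.pi_lt_d6])
        (by norm_num) (by norm_num) (by norm_num)
    apply sqrt_step _ _ _ 1.9045 1.8357 hc1 hc2 (by norm_num)
    push_cast
    norm_num
    nlinarith [h, h1, h2]
end
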